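/- arXiv:0810.3024 — 16 statements merged into one kernel-verified Lean document; each statement's English description precedes it below -/
import Mathlib

section
/- A topological space X is quarter-stratifiable if and only if there exists a sequence (𝒰ₙ) of open covers of X and a sequence of functions sₙ : 𝒰ₙ → X such that for every x ∈ X and every choice Uₙ ∈ 𝒰ₙ with x ∈ Uₙ for all n, the sequence (sₙ(Uₙ)) converges to x. -/
/-- A topological space is quarter-stratifiable if there is a function `g : ℕ × X → τ`
assigning open sets such that `X = ⋃_{x} g n x` for every `n`, and whenever
`x ∈ g n (xs n)` for all `n`, the sequence `xs` converges to `x`. -/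
def QuarterStratifiable (X : Type*) [TopologicalSpace X] : Prop :=
  ∃ g : ℕ → X → Set X,
    (∀ n x, IsOpen (g n x)) ∧
    (∀ n : ℕ, ∀ y : X, ∃ x : X, y ∈ g n x) ∧
    (∀ (x : X) (xs : ℕ → X), (∀ n, x ∈ g n (xs n)) →
      Filter.Tendsto xs Filter.atTop (nhds x))

section

variable {X : Type*} [TopologicalSpace X]

theorem QuarterStratifiable.exists_covers (h : QuarterStratifiable X) :
    ∃ (𝒰 : ℕ → Set (Set X)) (s : ∀ n : ℕ, {U : Set X // U ∈ 𝒰 n} → X),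
      (∀ n, ∀ U ∈ 𝒰 n, IsOpen U) ∧
      (∀ n, ⋃₀ 𝒰 n = Set.univ) ∧
      (∀ (x : X) (U : ∀ n, {U : Set X // U ∈ 𝒰 n}),
        (∀ n, x ∈ (U n : Set X)) →
        Filter.Tendsto (fun n => s n (U n)) Filter.atTop (nhds x)) := by
  obtain ⟨g, hopen, hcover, hconv⟩ := h
  refine ⟨fun n => Set.range (g n), fun n => Set.rangeSplitting (g n), ?_, ?_, ?_⟩
  · rintro n _ ⟨x, rfl⟩
    exact hopen n x
  · intro n
    rw [Set.sUnion_range]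
    exact Set.iUnion_eq_univ_iff.2 (hcover n)
  · intro x U hxU
    refine hconv x _ fun n => ?_
    rw [Set.apply_rangeSplitting (g n)]
    exact hxU n

/-- The open set attached to `x` at stage `n` is the union of the members of `𝒰 n`
that `s n` sends to `x`. -/
theorem QuarterStratifiable.of_covers (𝒰 : ℕ → Set (Set X))
    (s : ∀ n : ℕ, {U : Set X // U ∈ 𝒰 n} → X)
    (hopen : ∀ n, ∀ U ∈ 𝒰 n, IsOpen U) (hcover : ∀ n, ⋃₀ 𝒰 n = Set.univ)
    (hconv : ∀ (x : X) (U : ∀ n, {U : Set X // U ∈ 𝒰 n}),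
      (∀ n, x ∈ (U n : Set X)) →
      Filter.Tendsto (fun n => s n (U n)) Filter.atTop (nhds x)) :
    QuarterStratifiable X := by
  refine ⟨fun n x => ⋃ (U : {U : Set X // U ∈ 𝒰 n}) (_ : s n U = x), (U : Set X),
    fun n x => isOpen_iUnion fun U => isOpen_iUnion fun _ => hopen n U U.2, ?_, ?_⟩
  · intro n y
    obtain ⟨U, hU, hyU⟩ := Set.mem_sUnion.1 (hcover n ▸ Set.mem_univ y)
    exact ⟨s n ⟨U, hU⟩, Set.mem_biUnion rfl hyU⟩
  · intro x xs hxs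
    simp only [Set.mem_iUnion, exists_prop] at hxs
    choose U hUxs hxU using hxs
    simpa only [hUxs] using hconv x U hxU

end

/-- `X` is quarter-stratifiable iff there are open covers `𝒰 n` and functions
`s n : 𝒰 n → X` such that `s n (U n) → x` whenever `x ∈ U n ∈ 𝒰 n` for all `n`. -/
theorem quarterStratifiable_iff_covers (X : Type*) [TopologicalSpace X] :
    QuarterStratifiable X ↔
      ∃ (𝒰 : ℕ → Set (Set X)) (s : ∀ n : ℕ, {U : Set X // U ∈ 𝒰 n} → X),
        (∀ n, ∀ U ∈ 𝒰 n, IsOpen U) ∧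
        (∀ n, ⋃₀ 𝒰 n = Set.univ) ∧
        (∀ (x : X) (U : ∀ n, {U : Set X // U ∈ 𝒰 n}),
          (∀ n, x ∈ (U n : Set X)) →
          Filter.Tendsto (fun n => s n (U n)) Filter.atTop (nhds x)) :=
  ⟨QuarterStratifiable.exists_covers,
    fun ⟨𝒰, s, hopen, hcover, hconv⟩ => .of_covers 𝒰 s hopen hcover hconv⟩
end

section
/- A topological space X is quarter-stratifiable if and only if there exists a sequence (Fₙ) of lower semi-continuous multivalued functions Fₙ : X → X_d (where X_d is X with the discrete topology, i.e. Fₙ(x) is a set of points of X and Fₙ⁻¹(x') = {x : x' ∈ Fₙ(x)} is open for every x' ∈ X) such that for every point x ∈ X and every neighborhood O(x) of x there is n₀ ∈ ℕ with Fₙ(x) ⊆ O(x) for all n ≥ n₀. -/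
open Filter Topology

namespace Filter

variable {ι β : Type*} {la : Filter ι} {lb : Filter β}

theorem tendsto_smallSets_of_forall_selection {s : ι → Set β} (hne : ∀ i, (s i).Nonempty)
    (h : ∀ f : ι → β, (∀ i, f i ∈ s i) → Tendsto f la lb) : Tendsto s la lb.smallSets := by
  refine tendsto_smallSets_iff.2 fun t ht => ?_
  -- Select a point outside `t` whenever there is one.
  have hsel : ∀ i, ∃ b ∈ s i, b ∈ t → s i ⊆ t := fun i => by
    by_cases hst : s i ⊆ t
    · exact (hne i).imp fun b hb => ⟨hb, fun _ => hst⟩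
    · obtain ⟨b, hbs, hbt⟩ := Set.not_subset.1 hst
      exact ⟨b, hbs, fun hb => absurd hb hbt⟩
  choose f hfs hft using hsel
  exact ((h f hfs).eventually ht).mono hft

theorem tendsto_smallSets_iff_forall_selection {s : ι → Set β} (hne : ∀ i, (s i).Nonempty) :
    Tendsto s la lb.smallSets ↔ ∀ f : ι → β, (∀ i, f i ∈ s i) → Tendsto f la lb :=
  ⟨fun hs _ hf => hs.of_smallSets (Eventually.of_forall hf),
    tendsto_smallSets_of_forall_selection hne⟩

end Filter

/-- `X` is quarter-stratifiable iff there is a sequence of lower semi-continuous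
multivalued functions `F n : X → X_d` (lower semi-continuity into the discrete
topology means `{x | x' ∈ F n x}` is open for every point `x'`) tending to the
identity map of `X`. -/
theorem quarterStratifiable_iff_lsc (X : Type*) [TopologicalSpace X] :
    QuarterStratifiable X ↔
      ∃ F : ℕ → X → Set X,
        (∀ n x, (F n x).Nonempty) ∧
        (∀ (n : ℕ) (x' : X), IsOpen {x : X | x' ∈ F n x}) ∧
        (∀ (x : X), ∀ O ∈ nhds x, ∃ n₀ : ℕ, ∀ n ≥ n₀, F n x ⊆ O) := by
  have tendsto_iff (S : ℕ → Set X) (x : X) :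
      Tendsto S atTop (𝓝 x).smallSets ↔ ∀ O ∈ 𝓝 x, ∃ n₀, ∀ n ≥ n₀, S n ⊆ O := by
    simp only [tendsto_smallSets_iff, eventually_atTop]
  constructor
  · rintro ⟨g, hopen, hcov, hconv⟩
    refine ⟨fun n x => {x' | x ∈ g n x'}, hcov, hopen, fun x => (tendsto_iff _ x).1 ?_⟩
    exact (tendsto_smallSets_iff_forall_selection (hcov · x)).2 (hconv x)
  · rintro ⟨F, hne, hopen, hlim⟩
    refine ⟨fun n x' => {x | x' ∈ F n x}, hopen, hne, fun x => ?_⟩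
    exact (tendsto_smallSets_iff_forall_selection (hne · x)).1 ((tendsto_iff _ x).2 (hlim x))
end

section
/- Every open subspace of a quarter-stratifiable space is quarter-stratifiable. -/
open Filter Topology Set

theorem tendsto_setOf_mem_smallSets_of_quarterStratification {X : Type*} [TopologicalSpace X]
    {g : ℕ → X → Set X} (hcov : ∀ n y, ∃ x, y ∈ g n x)
    (hconv : ∀ (x : X) (xs : ℕ → X), (∀ n, x ∈ g n (xs n)) → Tendsto xs atTop (𝓝 x))
    (x : X) : Tendsto (fun n => {z | x ∈ g n z}) atTop (𝓝 x).smallSets := by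
  refine tendsto_smallSets_iff.2 fun V hV => ?_
  have hwitness : ∀ n, ∃ z, x ∈ g n z ∧ (z ∈ V → {w | x ∈ g n w} ⊆ V) := by
    intro n
    by_cases hsub : {w | x ∈ g n w} ⊆ V
    · obtain ⟨z, hz⟩ := hcov n x
      exact ⟨z, hz, fun _ => hsub⟩
    · obtain ⟨z, hz, hzV⟩ := not_subset.1 hsub
      exact ⟨z, hz, fun hzV' => absurd hzV' hzV⟩
  choose xs hxs hsubV using hwitness
  exact ((hconv x xs hxs).eventually hV).mono hsubV

/-- Every open subspace of a quarter-stratifiable space is quarter-stratifiable. -/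
theorem quarterStratifiable_open_subspace (X : Type*) [TopologicalSpace X]
    (hX : QuarterStratifiable X) (U : Set X) (hU : IsOpen U) :
    QuarterStratifiable U := by
  obtain ⟨g, hopen, hcov, hconv⟩ := hX
  have hsmall := tendsto_setOf_mem_smallSets_of_quarterStratification hcov hconv
  refine ⟨fun n u => Subtype.val ⁻¹' ⋃ m ≥ n, g m u, fun n u => ?_, fun n y => ?_,
    fun u us hus => ?_⟩
  · exact (isOpen_biUnion fun m _ => hopen m u).preimage continuous_subtype_val
  · obtain ⟨m, hmU, hnm⟩ := ((tendsto_smallSets_iff.1 (hsmall y) U (hU.mem_nhds y.2)).and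
      (eventually_ge_atTop n)).exists
    obtain ⟨z, hz⟩ := hcov m y
    exact ⟨⟨z, hmU hz⟩, mem_biUnion hnm hz⟩
  · simp only [mem_preimage, mem_iUnion, exists_prop] at hus
    choose m hnm hm using hus
    have hm_atTop : Tendsto m atTop atTop := tendsto_atTop_mono hnm tendsto_id
    exact IsEmbedding.subtypeVal.tendsto_nhds_iff.2
      (((hsmall u).comp hm_atTop).of_smallSets (Eventually.of_forall hm))
end

section
/- Every retract of a quarter-stratifiable space is quarter-stratifiable. -/
/-! Pull the quarter-stratification `g` of `X` back along `i`, indexing by `r`: the `n`-th set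
at `z : Y` is `i⁻¹' ⋃ {g n x | r x = z}`. If `y` lies in these sets at indices `r xₙ`, then
`xₙ → i y` in `X`, and continuity of `r` gives `r xₙ → r (i y) = y`. -/

theorem QuarterStratifiable.of_leftInverse {X Y : Type*} [TopologicalSpace X]
    [TopologicalSpace Y] (hX : QuarterStratifiable X) {i : Y → X} {r : X → Y}
    (hi : Continuous i) (hr : Continuous r) (hri : Function.LeftInverse r i) :
    QuarterStratifiable Y := by
  obtain ⟨g, hg_open, hg_cover, hg_tendsto⟩ := hX
  refine ⟨fun n z => i ⁻¹' ⋃ x ∈ r ⁻¹' {z}, g n x, fun n z => ?_, fun n y => ?_,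
    fun y zs hy => ?_⟩
  · exact (isOpen_biUnion fun x _ => hg_open n x).preimage hi
  · obtain ⟨x, hx⟩ := hg_cover n (i y)
    exact ⟨r x, Set.mem_biUnion rfl hx⟩
  · have hlift : ∀ n, ∃ x, r x = zs n ∧ i y ∈ g n x := fun n => by
      simpa only [Set.mem_preimage, Set.mem_iUnion, Set.mem_singleton_iff, exists_prop]
        using hy n
    choose xs hxs_r hxs_mem using hlift
    have hxs : Filter.Tendsto xs Filter.atTop (nhds (i y)) := hg_tendsto _ xs hxs_mem
    simpa only [Function.comp_def, hxs_r, hri y] using (hr.tendsto _).comp hxs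

/-- Every retract of a quarter-stratifiable space is quarter-stratifiable. -/
theorem quarterStratifiable_retract (X : Type*) [TopologicalSpace X]
    (hX : QuarterStratifiable X) (Y : Set X) (r : X → Y)
    (hr : Continuous r) (hretr : ∀ y : Y, r y = y) :
    QuarterStratifiable Y :=
  hX.of_leftInverse continuous_subtype_val hr hretr
end

section
/- Every Hausdorff quarter-stratifiable space has countable pseudo-character, i.e. every singleton {x} is a Gδ-set. -/
section CoverStar

variable {X : Type*} (g : ℕ → X → Set X)

def coverStar (n : ℕ) (x : X) : Set X :=
  ⋃ (y) (_ : x ∈ g n y), g n y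

variable {g}

theorem mem_coverStar_iff {n : ℕ} {x z : X} :
    z ∈ coverStar g n x ↔ ∃ y, x ∈ g n y ∧ z ∈ g n y := by
  simp [coverStar]

theorem self_mem_coverStar {n : ℕ} {x y : X} (hy : x ∈ g n y) : x ∈ coverStar g n x :=
  mem_coverStar_iff.2 ⟨y, hy, hy⟩

theorem isOpen_coverStar [TopologicalSpace X] (hg : ∀ n y, IsOpen (g n y)) (n : ℕ) (x : X) :
    IsOpen (coverStar g n x) :=
  isOpen_biUnion fun y _ => hg n y

theorem eq_of_forall_mem_coverStar [TopologicalSpace X] [T2Space X]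
    (hg : ∀ (x : X) (xs : ℕ → X), (∀ n, x ∈ g n (xs n)) →
      Filter.Tendsto xs Filter.atTop (nhds x))
    {x z : X} (hz : ∀ n, z ∈ coverStar g n x) : z = x := by
  choose ys hx hz using fun n => mem_coverStar_iff.1 (hz n)
  exact tendsto_nhds_unique (hg z ys hz) (hg x ys hx)

theorem iInter_coverStar_eq_singleton [TopologicalSpace X] [T2Space X]
    (hcov : ∀ n (x : X), ∃ y, x ∈ g n y)
    (hg : ∀ (x : X) (xs : ℕ → X), (∀ n, x ∈ g n (xs n)) →
      Filter.Tendsto xs Filter.atTop (nhds x))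
    (x : X) : ⋂ n, coverStar g n x = {x} := by
  refine Set.Subset.antisymm (fun z hz => eq_of_forall_mem_coverStar hg (Set.mem_iInter.1 hz)) ?_
  exact Set.singleton_subset_iff.2 <|
    Set.mem_iInter.2 fun n => self_mem_coverStar (hcov n x).choose_spec

end CoverStar

/-- Every Hausdorff quarter-stratifiable space has countable pseudo-character:
every singleton is a Gδ-set. -/
theorem quarterStratifiable_countable_pseudocharacter (X : Type*) [TopologicalSpace X]
    [T2Space X] (hX : QuarterStratifiable X) (x : X) : IsGδ ({x} : Set X) := by
  obtain ⟨g, hopen, hcov, hconv⟩ := hX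
  rw [← iInter_coverStar_eq_singleton hcov hconv x]
  exact IsGδ.iInter fun n => (isOpen_coverStar hopen n x).isGδ
end

section
/- Every compact Hausdorff quarter-stratifiable space is metrizable. -/
open Filter Set Topology TopologicalSpace Uniformity

section CompactSpace

variable {X : Type*} [TopologicalSpace X] [CompactSpace X]

theorem nhdsSet_eq_iInf_principal_of_iInter_closure_subset {ι : Type*} {K : Set X}
    {V : ι → Set X} (hVo : ∀ i, IsOpen (V i)) (hKV : ∀ i, K ⊆ V i)
    (hVK : ⋂ i, closure (V i) ⊆ K) :
    𝓝ˢ K = ⨅ i, 𝓟 (V i) := by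
  refine le_antisymm (le_iInf fun i => le_principal_iff.2 ((hVo i).mem_nhdsSet.2 (hKV i)))
    fun W hW => ?_
  obtain ⟨O, hOo, hKO, hOW⟩ := mem_nhdsSet_iff_exists.1 hW
  obtain ⟨s, hs⟩ := hOo.isClosed_compl.isCompact.elim_finite_subfamily_closed
    (fun i => closure (V i)) (fun _ => isClosed_closure)
    (eq_empty_of_forall_notMem fun x hx => hx.1 (hKO (hVK hx.2)))
  refine mem_of_superset ((biInter_finset_mem s).2 fun i _ => mem_iInf_of_mem i
    (mem_principal_self _)) fun x hx => hOW ?_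
  by_contra hxO
  exact (eq_empty_iff_forall_notMem.1 hs) x
    ⟨hxO, mem_iInter₂.2 fun i hi => subset_closure (mem_iInter₂.1 hx i hi)⟩

theorem IsGδ.isCountablyGenerated_nhdsSet [NormalSpace X] {K : Set X} (hKc : IsClosed K)
    (hKg : IsGδ K) : IsCountablyGenerated (𝓝ˢ K) := by
  obtain ⟨T, hTo, hTc, rfl⟩ := hKg
  have : Countable T := hTc.to_subtype
  have hshrink (t : T) : ∃ v, IsOpen v ∧ ⋂₀ T ⊆ v ∧ closure v ⊆ t :=
    normal_exists_closure_subset hKc (hTo t t.2) (sInter_subset_of_mem t.2)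
  choose V hVo hKV hVt using hshrink
  rw [nhdsSet_eq_iInf_principal_of_iInter_closure_subset hVo hKV
    (sInter_eq_iInter ▸ iInter_mono hVt)]
  infer_instance

theorem metrizableSpace_of_isGδ_diagonal [T2Space X] (h : IsGδ (diagonal X)) :
    MetrizableSpace X := by
  let := uniformSpaceOfCompactR1 (γ := X)
  have : IsCountablyGenerated (𝓤 X) := h.isCountablyGenerated_nhdsSet isClosed_diagonal
  exact UniformSpace.metrizableSpace

end CompactSpace

theorem QuarterStratifiable.isGδ_diagonal {X : Type*} [TopologicalSpace X] [T2Space X]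
    (hX : QuarterStratifiable X) : IsGδ (diagonal X) := by
  obtain ⟨g, hopen, hcover, hconv⟩ := hX
  have hdiag : diagonal X = ⋂ n, ⋃ z, g n z ×ˢ g n z := by
    ext ⟨x, y⟩
    simp only [mem_diagonal_iff, mem_iInter, mem_iUnion, mem_prod]
    refine ⟨fun hxy n => hxy ▸ (hcover n x).imp fun _ hz => ⟨hz, hz⟩, fun hxy => ?_⟩
    choose z hxz hyz using hxy
    exact tendsto_nhds_unique (hconv x z hxz) (hconv y z hyz)
  rw [hdiag]
  exact .iInter_of_isOpen fun n => isOpen_iUnion fun z => (hopen n z).prod (hopen n z)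

/-- Every compact Hausdorff quarter-stratifiable space is metrizable. -/
theorem quarterStratifiable_compact_metrizable (X : Type*) [TopologicalSpace X]
    [CompactSpace X] [T2Space X] (hX : QuarterStratifiable X) :
    TopologicalSpace.MetrizableSpace X :=
  metrizableSpace_of_isGδ_diagonal hX.isGδ_diagonal
end

section
/- If f : Y → X is a continuous bijection onto a quarter-stratifiable space X and the inverse f⁻¹ : X → Y is sequentially continuous, then Y is quarter-stratifiable. -/
/-! Pull the quarter-stratification `G` of `X` back along `f`, setting `G' n y := f⁻¹' (G n (f y))`.
The sets stay open since `f` is continuous, they still cover since `f` is onto, and if `y ∈ G' n (yₙ)`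
for all `n`, then `f yₙ → f y`, which the sequentially continuous inverse carries back to `yₙ → y`. -/

open Filter Topology

theorem QuarterStratifiable.of_continuous_surjective {X Y : Type*} [TopologicalSpace X]
    [TopologicalSpace Y] (hX : QuarterStratifiable X) {f : Y → X} (hf : Continuous f)
    (hsurj : Function.Surjective f)
    (hlift : ∀ (ys : ℕ → Y) (y : Y), Tendsto (f ∘ ys) atTop (𝓝 (f y)) → Tendsto ys atTop (𝓝 y)) :
    QuarterStratifiable Y := by
  obtain ⟨G, hG_open, hG_cover, hG_tendsto⟩ := hX
  refine ⟨fun n y => f ⁻¹' G n (f y), fun n y => (hG_open n (f y)).preimage hf,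
    fun n y => ?_, fun y ys hy => hlift ys y (hG_tendsto (f y) (f ∘ ys) hy)⟩
  obtain ⟨x, hx⟩ := hG_cover n (f y)
  obtain ⟨y', rfl⟩ := hsurj x
  exact ⟨y', hx⟩

theorem tendsto_of_tendsto_comp_of_leftInverse {X Y : Type*} [TopologicalSpace X]
    [TopologicalSpace Y] {f : Y → X} {g : X → Y} (hgf : Function.LeftInverse g f)
    (hg : ∀ (x : ℕ → X) (a : X), Tendsto x atTop (𝓝 a) → Tendsto (g ∘ x) atTop (𝓝 (g a)))
    {ys : ℕ → Y} {y : Y} (h : Tendsto (f ∘ ys) atTop (𝓝 (f y))) : Tendsto ys atTop (𝓝 y) := by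
  simpa only [← Function.comp_assoc, hgf.comp_eq_id, Function.id_comp, hgf y] using
    hg (f ∘ ys) (f y) h

/-- If `f : Y → X` is a continuous bijection onto a quarter-stratifiable space whose
inverse is sequentially continuous, then `Y` is quarter-stratifiable. -/
theorem quarterStratifiable_of_condensation (X Y : Type*) [TopologicalSpace X]
    [TopologicalSpace Y] (hX : QuarterStratifiable X) (f : Y → X) (g : X → Y)
    (hf : Continuous f) (hgf : Function.LeftInverse g f) (hfg : Function.RightInverse g f)
    (hg : ∀ (x : ℕ → X) (a : X), Filter.Tendsto x Filter.atTop (nhds a) →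
      Filter.Tendsto (fun n => g (x n)) Filter.atTop (nhds (g a))) :
    QuarterStratifiable Y :=
  hX.of_continuous_surjective hf hfg.surjective fun _ _ =>
    tendsto_of_tendsto_comp_of_leftInverse hgf hg
end

section
/- If f : X → Y is a finite-to-one, open, continuous surjection and X is quarter-stratifiable, then Y is quarter-stratifiable. -/
open Filter Set Topology

lemma tendsto_inf_principal_of_forall_mem {X : Type*} [TopologicalSpace X] {g : ℕ → X → Set X}
    {x : X} (hcover : ∀ n, ∃ x', x ∈ g n x')
    (hconv : ∀ xs : ℕ → X, (∀ n, x ∈ g n (xs n)) → Tendsto xs atTop (𝓝 x))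
    {xs : ℕ → X} {S : Set ℕ} (hS : ∀ n ∈ S, x ∈ g n (xs n)) :
    Tendsto xs (atTop ⊓ 𝓟 S) (𝓝 x) := by
  classical
  choose filler hfiller using hcover
  -- Outside `S`, patch `xs` with points `x'` such that `x ∈ g n x'`, so that `hconv` applies.
  let xs' : ℕ → X := fun n => if n ∈ S then xs n else filler n
  have hxs' : Tendsto xs' atTop (𝓝 x) := hconv xs' fun n => by
    by_cases hn : n ∈ S
    · simpa [xs', hn] using hS n hn
    · simpa [xs', hn] using hfiller n
  have heq : xs' =ᶠ[atTop ⊓ 𝓟 S] xs :=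
    eventually_inf_principal.2 (Eventually.of_forall fun n hn => if_pos hn)
  exact (hxs'.mono_left inf_le_left).congr' heq

lemma tendsto_of_tendsto_inf_principal_fibers {ι α β : Type*} {l : Filter ι} {l' : Filter β}
    {u : ι → β} {c : ι → α} {s : Set α} (hs : s.Finite) (hc : ∀ i, c i ∈ s)
    (h : ∀ a ∈ s, Tendsto u (l ⊓ 𝓟 {i | c i = a}) l') :
    Tendsto u l l' := by
  intro V hV
  change ∀ᶠ i in l, u i ∈ V
  have hfib : ∀ a ∈ s, ∀ᶠ i in l, c i = a → u i ∈ V := fun a ha =>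
    eventually_inf_principal.1 (h a ha hV)
  filter_upwards [(hs.eventually_all).2 hfib] with i hi using hi (c i) (hc i) rfl

/-- If `f : X → Y` is a finite-to-one open continuous surjection and `X` is
quarter-stratifiable, then so is `Y`. -/
theorem quarterStratifiable_of_finiteToOne_openMap (X Y : Type*) [TopologicalSpace X]
    [TopologicalSpace Y] (hX : QuarterStratifiable X) (f : X → Y)
    (hf : Continuous f) (hopen : IsOpenMap f) (hsurj : Function.Surjective f)
    (hfin : ∀ y : Y, (f ⁻¹' {y}).Finite) :
    QuarterStratifiable Y := by
  obtain ⟨g, hg_open, hcover, hconv⟩ := hX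
  refine ⟨fun n y => ⋃ x ∈ f ⁻¹' {y}, f '' g n x,
    fun n y => isOpen_biUnion fun x _ => hopen _ (hg_open n x), ?_, ?_⟩
  · intro n y
    obtain ⟨x, rfl⟩ := hsurj y
    obtain ⟨x', hx'⟩ := hcover n x
    exact ⟨f x', mem_biUnion rfl ⟨x, hx', rfl⟩⟩
  · intro y ys hys
    simp only [mem_iUnion, mem_preimage, mem_singleton_iff, mem_image, exists_prop] at hys
    choose xs hxs zs hzs hfzs using hys
    have hys_eq : ys = f ∘ xs := funext fun n => (hxs n).symm
    refine tendsto_of_tendsto_inf_principal_fibers (hfin y) (c := zs) hfzs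
      fun z hz => ?_
    rw [hys_eq, ← show f z = y from hz]
    exact (hf.tendsto z).comp <| tendsto_inf_principal_of_forall_mem (hcover · z) (hconv z)
      fun n (hn : zs n = z) => hn ▸ hzs n
end

section
/- The countable product of quarter-stratifiable spaces is quarter-stratifiable. -/
/-! Give the point `x` of the product, at stage `n`, the open box whose coordinates `i ≤ n` are
the stage-`n` sets of the factors and whose other coordinates are unconstrained. Finitely many
constraints keep the box open, and every coordinate `i` is constrained from stage `i` on, so a
sequence of centres is eventually controlled in each coordinate. A quarter-stratification already
forces convergence under an eventual hypothesis, which gives coordinatewise convergence. -/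

open Filter Topology Set

section

variable {X : Type*} [TopologicalSpace X]

structure IsQuarterStratification (g : ℕ → X → Set X) : Prop where
  isOpen : ∀ n x, IsOpen (g n x)
  exists_mem : ∀ n y, ∃ x, y ∈ g n x
  tendsto : ∀ x (xs : ℕ → X), (∀ n, x ∈ g n (xs n)) → Tendsto xs atTop (𝓝 x)

theorem quarterStratifiable_iff :
    QuarterStratifiable X ↔ ∃ g : ℕ → X → Set X, IsQuarterStratification g :=
  ⟨fun ⟨g, h₁, h₂, h₃⟩ => ⟨g, ⟨h₁, h₂, h₃⟩⟩, fun ⟨g, ⟨h₁, h₂, h₃⟩⟩ => ⟨g, h₁, h₂, h₃⟩⟩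

theorem IsQuarterStratification.tendsto_of_eventually {g : ℕ → X → Set X}
    (hg : IsQuarterStratification g) {x : X} {xs : ℕ → X}
    (hxs : ∀ᶠ n in atTop, x ∈ g n (xs n)) : Tendsto xs atTop (𝓝 x) := by
  classical
  choose w hw using fun n => hg.exists_mem n x
  -- Replace the terms where the hypothesis fails by centres of sets containing `x`.
  set zs : ℕ → X := fun n => if x ∈ g n (xs n) then xs n else w n
  have hzs : ∀ n, x ∈ g n (zs n) := fun n => by
    by_cases h : x ∈ g n (xs n) <;> simp [zs, h, hw n]
  refine (hg.tendsto x zs hzs).congr' ?_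
  filter_upwards [hxs] with n hn
  simp [zs, hn]

end

section

variable {X : ℕ → Type*} [∀ i, TopologicalSpace (X i)]

def piStratification (g : ∀ i, ℕ → X i → Set (X i)) (n : ℕ) (x : ∀ i, X i) : Set (∀ i, X i) :=
  (Iic n).pi fun i => g i n (x i)

theorem IsQuarterStratification.pi {g : ∀ i, ℕ → X i → Set (X i)}
    (hg : ∀ i, IsQuarterStratification (g i)) :
    IsQuarterStratification (piStratification g) where
  isOpen n x := isOpen_set_pi (finite_Iic n) fun i _ => (hg i).isOpen n (x i)
  exists_mem n y := by
    choose x hx using fun i => (hg i).exists_mem n (y i)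
    exact ⟨x, fun i _ => hx i⟩
  tendsto x xs hxs := tendsto_pi_nhds.2 fun i =>
    (hg i).tendsto_of_eventually <|
      (eventually_ge_atTop i).mono fun n hin => hxs n i (mem_Iic.2 hin)

end

theorem quarterStratifiable_pi_general (X : ℕ → Type*) [∀ i, TopologicalSpace (X i)]
    (hX : ∀ i, QuarterStratifiable (X i)) :
    QuarterStratifiable (∀ i, X i) := by
  choose g hg using fun i => quarterStratifiable_iff.1 (hX i)
  exact quarterStratifiable_iff.2 ⟨piStratification g, IsQuarterStratification.pi hg⟩

/-- The countable product of (nonempty) quarter-stratifiable spaces is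
quarter-stratifiable. -/
theorem quarterStratifiable_pi (X : ℕ → Type*) [∀ i, TopologicalSpace (X i)]
    [∀ i, Nonempty (X i)] (hX : ∀ i, QuarterStratifiable (X i)) :
    QuarterStratifiable (∀ i, X i) :=
  quarterStratifiable_pi_general X hX
end

section
/- If X = A ∪ B where A and B are quarter-stratifiable subspaces of X and B is a closed Gδ-set in X, then X is quarter-stratifiable. -/
open Filter Set

/-- If `X = A ∪ B` with `A`, `B` quarter-stratifiable subspaces and `B` a closed
Gδ-set in `X`, then `X` is quarter-stratifiable. -/
theorem quarterStratifiable_union (X : Type*) [TopologicalSpace X] (A B : Set X)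
    (hcover : A ∪ B = Set.univ) (hA : QuarterStratifiable A) (hB : QuarterStratifiable B)
    (hBclosed : IsClosed B) (hBGδ : IsGδ B) :
    QuarterStratifiable X := by
  classical
  obtain ⟨gA, hgAopen, hgAcov, hgAconv⟩ := hA
  obtain ⟨gB, hgBopen, hgBcov, hgBconv⟩ := hB
  have hmem : ∀ x : X, x ∈ A ∪ B := fun x => hcover ▸ mem_univ x
  -- extend the subspace-open sets to open sets of X
  have hWA' : ∀ (n : ℕ) (a : A), ∃ W : Set X, IsOpen W ∧ Subtype.val ⁻¹' W = gA n a := by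
    intro n a
    obtain ⟨W, hW, hWe⟩ := isOpen_induced_iff.mp (hgAopen n a)
    exact ⟨W, hW, hWe⟩
  choose WA hWAopen hWAeq using hWA'
  have hWB' : ∀ (n : ℕ) (b : B), ∃ W : Set X, IsOpen W ∧ Subtype.val ⁻¹' W = gB n b := by
    intro n b
    obtain ⟨W, hW, hWe⟩ := isOpen_induced_iff.mp (hgBopen n b)
    exact ⟨W, hW, hWe⟩
  choose WB hWBopen hWBeq using hWB'
  -- a decreasing sequence of open sets with intersection B
  obtain ⟨f, hfopen, hfB⟩ := isGδ_iff_eq_iInter_nat.mp hBGδ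
  set U : ℕ → Set X := fun n => ⋂ k ∈ Finset.range (n + 1), f k with hUdef
  have hUopen : ∀ n, IsOpen (U n) := fun n => isOpen_biInter_finset fun k _ => hfopen k
  have hBU : ∀ n, B ⊆ U n := by
    intro n x hx
    simp only [hUdef, mem_iInter]
    intro k _
    have : x ∈ ⋂ n, f n := hfB ▸ hx
    exact mem_iInter.mp this k
  have hUanti : ∀ {m n : ℕ}, m ≤ n → U n ⊆ U m := by
    intro m n hmn x hx
    simp only [hUdef, mem_iInter, Finset.mem_range] at hx ⊢
    intro k hk
    exact hx k (by omega)
  have hUB : ∀ x : X, (∀ n, x ∈ U n) → x ∈ B := by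
    intro x hx
    rw [hfB]
    refine mem_iInter.mpr fun n => ?_
    have := hx n
    simp only [hUdef, mem_iInter, Finset.mem_range] at this
    exact this n (by omega)
  refine ⟨fun n x =>
    (if h : x ∈ B then U n ∩ WB n ⟨x, h⟩ else ∅) ∪
    (if h : x ∈ A then WA n ⟨x, h⟩ \ B else ∅), ?_, ?_, ?_⟩
  · -- openness
    intro n x
    refine IsOpen.union ?_ ?_
    · split_ifs with h
      · exact (hUopen n).inter (hWBopen n ⟨x, h⟩)
      · exact isOpen_empty
    · split_ifs with h
      · exact (hWAopen n ⟨x, h⟩).sdiff hBclosed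
      · exact isOpen_empty
  · -- coverage
    intro n y
    by_cases hy : y ∈ B
    · obtain ⟨b, hb⟩ := hgBcov n ⟨y, hy⟩
      refine ⟨(b : X), Or.inl ?_⟩
      rw [dif_pos b.2]
      refine ⟨hBU n hy, ?_⟩
      have : (⟨y, hy⟩ : B) ∈ Subtype.val ⁻¹' WB n b := by rw [hWBeq]; exact hb
      exact this
    · have hyA : y ∈ A := (hmem y).resolve_right hy
      obtain ⟨a, ha⟩ := hgAcov n ⟨y, hyA⟩
      refine ⟨(a : X), Or.inr ?_⟩
      rw [dif_pos a.2]
      have : (⟨y, hyA⟩ : A) ∈ Subtype.val ⁻¹' WA n a := by rw [hWAeq]; exact ha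
      exact ⟨this, hy⟩
  · -- convergence
    intro x xs hxs
    by_cases hxB : x ∈ B
    · -- x ∈ B : all the witnesses must come from the B-part
      have hb : ∀ n, ∃ h : xs n ∈ B, x ∈ U n ∩ WB n ⟨xs n, h⟩ := by
        intro n
        rcases hxs n with h | h
        · by_cases h' : xs n ∈ B
          · rw [dif_pos h'] at h; exact ⟨h', h⟩
          · rw [dif_neg h'] at h; exact absurd h (notMem_empty x)
        · by_cases h' : xs n ∈ A
          · rw [dif_pos h'] at h; exact absurd hxB h.2
          · rw [dif_neg h'] at h; exact absurd h (notMem_empty x)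
      set bs : ℕ → B := fun n => ⟨xs n, (hb n).choose⟩ with hbs
      have hmemb : ∀ n, (⟨x, hxB⟩ : B) ∈ gB n (bs n) := by
        intro n
        rw [← hWBeq]
        exact ((hb n).choose_spec).2
      have ht := hgBconv ⟨x, hxB⟩ bs hmemb
      have ht2 : Tendsto (fun n => (bs n : X)) atTop (nhds x) :=
        (continuous_subtype_val.tendsto _).comp ht
      exact ht2
    · -- x ∉ B : eventually the witnesses come from the A-part
      have hxA : x ∈ A := (hmem x).resolve_right hxB
      obtain ⟨m, hm⟩ : ∃ m, x ∉ U m := by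
        by_contra h
        push_neg at h
        exact hxB (hUB x h)
      have key : ∀ n, m ≤ n → ∃ h : xs n ∈ A, x ∈ WA n ⟨xs n, h⟩ \ B := by
        intro n hn
        rcases hxs n with h | h
        · by_cases h' : xs n ∈ B
          · rw [dif_pos h'] at h; exact absurd (hUanti hn h.1) hm
          · rw [dif_neg h'] at h; exact absurd h (notMem_empty x)
        · by_cases h' : xs n ∈ A
          · rw [dif_pos h'] at h; exact ⟨h', h⟩
          · rw [dif_neg h'] at h; exact absurd h (notMem_empty x)
      have asdef : ∀ n, ∃ a : A, (⟨x, hxA⟩ : A) ∈ gA n a ∧ (m ≤ n → (a : X) = xs n) := by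
        intro n
        by_cases hn : m ≤ n
        · obtain ⟨h1, h2⟩ := key n hn
          refine ⟨⟨xs n, h1⟩, ?_, fun _ => rfl⟩
          rw [← hWAeq]
          exact h2.1
        · obtain ⟨a, ha⟩ := hgAcov n ⟨x, hxA⟩
          exact ⟨a, ha, fun h => absurd h hn⟩
      choose as has1 has2 using asdef
      have ht := hgAconv ⟨x, hxA⟩ as has1
      have ht2 : Tendsto (fun n => (as n : X)) atTop (nhds x) :=
        (continuous_subtype_val.tendsto _).comp ht
      refine ht2.congr' ?_
      filter_upwards [eventually_ge_atTop m] with n hn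
      exact has2 n hn
end

section
/- Every subspace of the Sorgenfrey line (the half-open interval [0,1) with the topology generated by the half-open intervals [a,b)) is quarter-stratifiable. -/
/-- The Sorgenfrey arrow: `[0,1)` with the topology generated by the half-open
intervals `[a,b)`, `0 ≤ a < b ≤ 1`. -/
def sorgenfreyArrowTop : TopologicalSpace (Set.Ico (0:ℝ) 1) :=
  TopologicalSpace.generateFrom
    {S | ∃ a b : ℝ, 0 ≤ a ∧ a < b ∧ b ≤ 1 ∧ S = {x : Set.Ico (0:ℝ) 1 | a ≤ (x : ℝ) ∧ (x : ℝ) < b}}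

/-- Every subspace of the Sorgenfrey arrow is quarter-stratifiable. -/
theorem sorgenfrey_subspace_quarterStratifiable (Y : Set (Set.Ico (0:ℝ) 1)) :
    @QuarterStratifiable Y (sorgenfreyArrowTop.induced Subtype.val) := by
  classical
  have hP : ∀ y : Y, ∃ b : ℝ, (y.1:ℝ) ≤ b ∧ b ≤ 1 ∧
      (∀ z : Y, (z.1:ℝ) < b → (z.1:ℝ) ≤ (y.1:ℝ)) ∧
      ((∃ c : ℝ, (y.1:ℝ) < c ∧ c ≤ 1 ∧ ∀ z : Y, (z.1:ℝ) < c → (z.1:ℝ) ≤ (y.1:ℝ)) →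
        (y.1:ℝ) < b) := by
    intro y
    by_cases h : ∃ c : ℝ, (y.1:ℝ) < c ∧ c ≤ 1 ∧ ∀ z : Y, (z.1:ℝ) < c → (z.1:ℝ) ≤ (y.1:ℝ)
    · obtain ⟨c, h1, h2, h3⟩ := h
      exact ⟨c, le_of_lt h1, h2, h3, fun _ => h1⟩
    · exact ⟨(y.1:ℝ), le_refl _, le_of_lt y.1.2.2, fun z hz => le_of_lt hz,
        fun hc => absurd hc h⟩
  choose B hB1 hB2 hB3 hB4 using hP
  refine ⟨fun n y => {z : Y | max 0 ((y.1:ℝ) - 1/(n+1)) ≤ (z.1:ℝ) ∧ (z.1:ℝ) < B y},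
    ?_, ?_, ?_⟩
  · intro n y
    refine ⟨{x : Set.Ico (0:ℝ) 1 | max 0 ((y.1:ℝ) - 1/(n+1)) ≤ (x:ℝ) ∧ (x:ℝ) < B y},
      ?_, rfl⟩
    by_cases hab : max 0 ((y.1:ℝ) - 1/(n+1)) < B y
    · exact TopologicalSpace.GenerateOpen.basic _
        ⟨_, _, le_max_left _ _, hab, hB2 y, rfl⟩
    · have hempty : {x : Set.Ico (0:ℝ) 1 |
          max 0 ((y.1:ℝ) - 1/(n+1)) ≤ (x:ℝ) ∧ (x:ℝ) < B y} = ∅ := by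
        ext x
        simp only [Set.mem_setOf_eq, Set.mem_empty_iff_false, iff_false, not_and, not_lt]
        intro h1
        exact le_trans (le_of_not_gt hab) h1
      rw [hempty]
      exact @isOpen_empty _ sorgenfreyArrowTop
  · intro n y
    by_cases h : ∃ x : Y, (y.1:ℝ) < (x.1:ℝ) ∧ (x.1:ℝ) < (y.1:ℝ) + 1/(n+1)
    · obtain ⟨x, h1, h2⟩ := h
      refine ⟨x, ?_, lt_of_lt_of_le h1 (hB1 x)⟩
      refine max_le y.1.2.1 (by linarith)
    · push_neg at h
      have hc : (0:ℝ) < 1/(n+1) := by positivity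
      have hPy : ∃ c : ℝ, (y.1:ℝ) < c ∧ c ≤ 1 ∧
          ∀ z : Y, (z.1:ℝ) < c → (z.1:ℝ) ≤ (y.1:ℝ) := by
        refine ⟨min ((y.1:ℝ) + 1/(n+1)) 1, lt_min (by linarith) y.1.2.2,
          min_le_right _ _, ?_⟩
        intro z hz
        by_contra hzy
        push_neg at hzy
        have h2 := h z hzy
        have h3 : (z.1:ℝ) < (y.1:ℝ) + 1/(n+1) := lt_of_lt_of_le hz (min_le_left _ _)
        linarith
      exact ⟨y, max_le y.1.2.1 (by linarith), hB4 y hPy⟩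
  · intro x xs hxs
    have key : ∀ n : ℕ, (x.1:ℝ) ≤ ((xs n).1:ℝ) ∧ ((xs n).1:ℝ) ≤ (x.1:ℝ) + 1/(n+1) := by
      intro n
      obtain ⟨h1, h2⟩ := hxs n
      refine ⟨hB3 (xs n) x h2, ?_⟩
      have h3 := le_trans (le_max_right 0 _) h1
      linarith
    rw [@nhds_induced _ _ sorgenfreyArrowTop Subtype.val x, Filter.tendsto_comap_iff]
    unfold sorgenfreyArrowTop
    rw [TopologicalSpace.tendsto_nhds_generateFrom_iff]
    rintro U ⟨a, b, ha, hab, hb1, rfl⟩ hxU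
    obtain ⟨hax, hxb⟩ := hxU
    obtain ⟨N, hN⟩ := exists_nat_one_div_lt (show (0:ℝ) < b - (x.1:ℝ) by linarith)
    filter_upwards [Filter.eventually_ge_atTop N] with n hn
    obtain ⟨h1, h2⟩ := key n
    have h4 : 1/((n:ℝ)+1) ≤ 1/((N:ℝ)+1) := by
      apply one_div_le_one_div_of_le (by positivity)
      have : (N:ℝ) ≤ (n:ℝ) := by exact_mod_cast hn
      linarith
    exact ⟨le_trans hax h1, by simp only [Function.comp_apply]; linarith⟩
end

section
/- Let B ⊆ ℝ be a set that is not σ-compact, and let ℝ_B denote the real line with the topology consisting of all sets of the form U ∪ A where U is open in the usual topology of ℝ and A ⊆ B. Then ℝ_B is not quarter-stratifiable. -/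
/-- The topology `ℝ_B`: sets of the form `U ∪ A` with `U` open in the usual topology
of `ℝ` and `A ⊆ B`. -/
def michaelTop (B : Set ℝ) : TopologicalSpace ℝ :=
  TopologicalSpace.generateFrom {S | ∃ (U A : Set ℝ), IsOpen U ∧ A ⊆ B ∧ S = U ∪ A}

open Set Filter Topology

theorem exists_forall_mem_imp_eq_of_isOpen_singleton {X : Type*} [TopologicalSpace X]
    {g : ℕ → X → Set X}
    (hg : ∀ (x : X) (xs : ℕ → X), (∀ n, x ∈ g n (xs n)) → Tendsto xs atTop (𝓝 x))
    {b : X} (hb : IsOpen ({b} : Set X)) : ∃ N, ∀ x, b ∈ g N x → x = b := by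
  by_contra! h
  choose xs hbxs hne using h
  obtain ⟨n, hn⟩ := ((hg b xs hbxs).eventually_mem (hb.mem_nhds rfl)).exists
  exact hne n hn

namespace MichaelLine

variable {B : Set ℝ}

theorem isOpen_singleton {b : ℝ} (hb : b ∈ B) : IsOpen[michaelTop B] {b} :=
  TopologicalSpace.isOpen_generateFrom_of_mem
    ⟨∅, {b}, isOpen_empty, singleton_subset_iff.2 hb, (empty_union _).symm⟩

theorem mem_nhds_of_notMem {O : Set ℝ} (hO : IsOpen[michaelTop B] O) {x : ℝ} (hxB : x ∉ B)
    (hxO : x ∈ O) : O ∈ 𝓝 x := by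
  induction hO with
  | basic S hS =>
    obtain ⟨U, A, hU, hAB, rfl⟩ := hS
    exact mem_of_superset (hU.mem_nhds (hxO.resolve_right fun hxA => hxB (hAB hxA)))
      subset_union_left
  | univ => exact univ_mem
  | inter U V _ _ ihU ihV => exact inter_mem (ihU hxO.1) (ihV hxO.2)
  | sUnion S _ ih =>
    obtain ⟨t, htS, hxt⟩ := hxO
    exact mem_of_superset (ih t htS hxt) (subset_sUnion_of_mem htS)

theorem closure_subset_of_forall_mem_imp_eq {C : Set ℝ} {V : ℝ → Set ℝ}
    (hV : ∀ z, IsOpen[michaelTop B] (V z)) (hcov : ∀ y, ∃ z, y ∈ V z) (hCB : C ⊆ B)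
    (hC : ∀ b ∈ C, ∀ z, b ∈ V z → z = b) :
    closure C ⊆ B := by
  intro x hx
  by_contra hxB
  obtain ⟨z, hxz⟩ := hcov x
  have hVz : V z ∈ 𝓝 x := mem_nhds_of_notMem (hV z) hxB hxz
  -- `V z` meets `C` in at most the point `z`, so this trace is closed.
  have hclosed : IsClosed (C ∩ V z) :=
    (subsingleton_singleton.anti fun b hb => (hC b hb.1 z hb.2).symm).isClosed
  have hx' : x ∈ closure (C ∩ V z) := mem_closure_iff_nhds.2 fun t ht => by
    simpa only [inter_comm, inter_left_comm] using
      mem_closure_iff_nhds.1 hx (t ∩ V z) (inter_mem ht hVz)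
  exact hxB (hCB (hclosed.closure_eq ▸ hx').1)

end MichaelLine

/-- If `B ⊆ ℝ` is not σ-compact, then `ℝ_B` is not quarter-stratifiable. -/
theorem michaelLine_not_quarterStratifiable (B : Set ℝ)
    (hB : ¬ ∃ K : ℕ → Set ℝ, (∀ n, IsCompact (K n)) ∧ B = ⋃ n, K n) :
    ¬ @QuarterStratifiable ℝ (michaelTop B) := by
  rintro ⟨g, hopen, hcov, hconv⟩
  set C : ℕ → Set ℝ := fun N => {b ∈ B | ∀ x, b ∈ g N x → x = b}
  have hB_eq : ⋃ N, closure (C N) = B := by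
    refine subset_antisymm (iUnion_subset fun N => ?_) fun b hb => ?_
    · exact MichaelLine.closure_subset_of_forall_mem_imp_eq (hopen N) (hcov N)
        (fun b hb => hb.1) fun b hb => hb.2
    · obtain ⟨N, hN⟩ := @exists_forall_mem_imp_eq_of_isOpen_singleton ℝ (michaelTop B) g
        hconv b (MichaelLine.isOpen_singleton hb)
      exact mem_iUnion_of_mem N (subset_closure ⟨hb, hN⟩)
  obtain ⟨K, hK, hKB⟩ : IsSigmaCompact B := hB_eq ▸ isSigmaCompact_iUnion _ fun N =>
    isSigmaCompact_univ.of_isClosed_subset isClosed_closure (subset_univ _)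
  exact hB ⟨K, hK, hKB.symm⟩
end

section
/- Let X be a metrizable space and Z a topological space in which every closed set F is a closure-Gδ set (i.e. F = ⋂ₙ Wₙ = ⋂ₙ cl(Wₙ) for some open sets Wₙ). If f : X × Y → Z is continuous in the first variable for each fixed y ∈ Y and Borel measurable of class α in the second variable for each fixed x ∈ X (α a countable ordinal), then f is Borel measurable of class α+1 on X × Y. -/
/-- The additive Borel class `𝒜_α(T)`: `𝒜₀` is the open sets, and for `α > 0`,
`𝒜_α` consists of countable unions of sets from `⋃_{β<α} ℳ_β`, where
`ℳ_β = {s | sᶜ ∈ 𝒜_β}` is the multiplicative class. -/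
noncomputable def addClass (T : Type*) [TopologicalSpace T] : Ordinal.{0} → Set (Set T) :=
  Ordinal.lt_wf.fix fun α rec =>
    if α = 0 then {s | IsOpen s}
    else {s : Set T | ∃ f : ℕ → Set T,
      (∀ n : ℕ, ∃ β : Ordinal, ∃ h : β < α, (f n)ᶜ ∈ rec β h) ∧ s = ⋃ n, f n}

/-- A function is Borel measurable of class `α` if preimages of open sets are in `𝒜_α`. -/
def BorelMeasClass {S Z : Type*} [TopologicalSpace S] [TopologicalSpace Z]
    (α : Ordinal.{0}) (f : S → Z) : Prop :=
  ∀ U : Set Z, IsOpen U → f ⁻¹' U ∈ addClass S α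

/-!
Fix an open `U ⊆ Z` and write `Uᶜ = ⋂ n, W n = ⋂ n, closure (W n)`. Metrize `X`; at every scale
`1 / (k + 1)` it has a σ-discrete open cover by sets `V k m z ⊆ ball z (1 / (k + 1))` (Stone).
Continuity in `x` gives: `f (x, y) ∈ U` iff for some `n` and all large `k`, every centre `z` of a
cover set containing `x` has `f (z, y) ∉ W n`. The failure of this at scale `k` is a σ-discrete
union of products `V k m z ×ˢ {y | f (z, y) ∈ W n}` whose second factors lie in `𝒜_α`, and such a
union lies in `𝒜_α(X × Y)`. That is proved by induction on the class, regrouping the terms by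
their (countably many) lower classes and using that closed sets of `X` are `G_δ`. So `f ⁻¹' U` is a
countable union of sets of `ℳ_α`, i.e. lies in `𝒜_(α+1)`.
-/

open Set Filter Function Metric Topology

section BorelClass

variable {T : Type*} [TopologicalSpace T] {α : Ordinal.{0}}

theorem addClass_zero : addClass T 0 = {s | IsOpen s} := by
  rw [addClass, Ordinal.lt_wf.fix_eq, if_pos rfl]

theorem addClass_of_ne_zero (hα : α ≠ 0) :
    addClass T α = {s | ∃ f : ℕ → Set T,
      (∀ n, ∃ β < α, (f n)ᶜ ∈ addClass T β) ∧ s = ⋃ n, f n} := by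
  rw [addClass, Ordinal.lt_wf.fix_eq, if_neg hα]
  simp only [exists_prop]

theorem iUnion_mem_addClass_of_compl_mem (hα : α ≠ 0) {κ : Type*} [Countable κ]
    {s : κ → Set T} (hs : ∀ k, ∃ β < α, (s k)ᶜ ∈ addClass T β) :
    ⋃ k, s k ∈ addClass T α := by
  rw [addClass_of_ne_zero hα]
  rcases isEmpty_or_nonempty κ with hκ | hκ
  · refine ⟨fun _ => ∅, fun _ => ⟨0, pos_iff_ne_zero.2 hα, ?_⟩, by simp⟩
    simp [addClass_zero]
  · obtain ⟨u, hu⟩ := exists_surjective_nat κ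
    exact ⟨s ∘ u, fun n => hs (u n), (hu.iUnion_comp s).symm⟩

theorem iUnion_mem_addClass {κ : Sort*} [Countable κ] {s : κ → Set T}
    (hs : ∀ k, s k ∈ addClass T α) : ⋃ k, s k ∈ addClass T α := by
  rcases eq_or_ne α 0 with rfl | hα
  · simp only [addClass_zero, mem_ofPred_eq] at hs ⊢
    exact isOpen_iUnion hs
  · simp only [addClass_of_ne_zero hα, mem_ofPred_eq] at hs
    choose f hf hsf using fun k : PLift κ => hs k.down
    rw [← iUnion_plift_down, iUnion_congr hsf, ← iUnion_prod' fun p => f p.1 p.2]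
    exact iUnion_mem_addClass_of_compl_mem hα fun p => hf p.1 p.2

theorem union_mem_addClass {s t : Set T} (hs : s ∈ addClass T α) (ht : t ∈ addClass T α) :
    s ∪ t ∈ addClass T α := by
  rw [union_eq_iUnion]
  exact iUnion_mem_addClass fun b => by cases b <;> assumption

theorem mem_addClass_of_isGδ_compl (hα : α ≠ 0) {s : Set T} (hs : IsGδ sᶜ) :
    s ∈ addClass T α := by
  obtain ⟨O, hO, hsO⟩ := isGδ_iff_eq_iInter_nat.1 hs
  rw [← compl_compl s, hsO, compl_iInter]
  exact iUnion_mem_addClass_of_compl_mem hα fun n =>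
    ⟨0, pos_iff_ne_zero.2 hα, by simpa [addClass_zero] using hO n⟩

theorem univ_mem_addClass : (univ : Set T) ∈ addClass T α := by
  rcases eq_or_ne α 0 with rfl | hα
  · simp [addClass_zero]
  · exact mem_addClass_of_isGδ_compl hα (by simp [IsGδ.empty])

end BorelClass

def DiscreteFamily {ι X : Type*} [TopologicalSpace X] (s : ι → Set X) : Prop :=
  ∀ x, ∃ t ∈ 𝓝 x, {i | (s i ∩ t).Nonempty}.Subsingleton

namespace DiscreteFamily

variable {ι X : Type*} [TopologicalSpace X] {s t : ι → Set X}

theorem locallyFinite (hs : DiscreteFamily s) : LocallyFinite s := fun x =>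
  let ⟨t, ht, hst⟩ := hs x
  ⟨t, ht, hst.finite⟩

theorem pairwise_disjoint (hs : DiscreteFamily s) : Pairwise (Disjoint on s) := by
  intro i j hij
  refine disjoint_left.2 fun x hxi hxj => hij ?_
  obtain ⟨t, ht, hst⟩ := hs x
  exact hst ⟨x, hxi, mem_of_mem_nhds ht⟩ ⟨x, hxj, mem_of_mem_nhds ht⟩

theorem subset (hs : DiscreteFamily s) (hts : ∀ i, t i ⊆ s i) : DiscreteFamily t := fun x =>
  let ⟨u, hu, hsu⟩ := hs x
  ⟨u, hu, fun _ hi _ hj => hsu (hi.mono (inter_subset_inter_left _ (hts _)))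
    (hj.mono (inter_subset_inter_left _ (hts _)))⟩

end DiscreteFamily

/-- Stone's construction: with `X` well-ordered, `V n z` thickens by `1 / (n + 1)` the core
`C n z` of points deep inside `ball z R` but outside the balls around all earlier centres. Cores
of distinct centres are `4 / (n + 1)`-apart, so each `V n` is discrete. -/
theorem Metric.exists_discreteFamily_cover (X : Type*) [PseudoMetricSpace X] {R : ℝ}
    (hR : 0 < R) :
    ∃ V : ℕ → X → Set X, (∀ n z, IsOpen (V n z)) ∧ (∀ n z, V n z ⊆ ball z R) ∧
      (∀ n, DiscreteFamily (V n)) ∧ ∀ x, ∃ n z, x ∈ V n z := by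
  obtain ⟨_, _⟩ := exists_wellFoundedLT X
  set r : ℕ → ℝ := fun n => 1 / (n + 1)
  have hr0 (n : ℕ) : 0 < r n := Nat.one_div_pos_of_nat
  set C : ℕ → X → Set X := fun n z => {x | dist x z + 4 * r n ≤ R ∧ ∀ z' < z, R ≤ dist x z'}
  have hC_sep {n z₁ z₂ x₁ x₂} (hz : z₁ < z₂) (h₁ : x₁ ∈ C n z₁) (h₂ : x₂ ∈ C n z₂) :
      4 * r n ≤ dist x₁ x₂ := by
    have h₁z : dist x₁ z₁ + 4 * r n ≤ R := h₁.1
    linarith [h₂.2 z₁ hz, dist_triangle x₂ x₁ z₁, dist_comm x₁ x₂]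
  refine ⟨fun n z => thickening (r n) (C n z), fun n z => isOpen_thickening, ?_, ?_, ?_⟩
  · intro n z y hy
    obtain ⟨x, hx, hyx⟩ := mem_thickening_iff.1 hy
    have hxz : dist x z + 4 * r n ≤ R := hx.1
    exact mem_ball.2 (by linarith [dist_triangle y x z, hr0 n])
  · intro n w
    refine ⟨ball w (r n), ball_mem_nhds w (hr0 n), fun z₁ hz₁ z₂ hz₂ => ?_⟩
    obtain ⟨y₁, hy₁, hwy₁⟩ := hz₁
    obtain ⟨y₂, hy₂, hwy₂⟩ := hz₂
    obtain ⟨x₁, hx₁, hyx₁⟩ := mem_thickening_iff.1 hy₁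
    obtain ⟨x₂, hx₂, hyx₂⟩ := mem_thickening_iff.1 hy₂
    have hclose : dist x₁ x₂ < 4 * r n := by
      linarith [dist_triangle4 x₁ y₁ y₂ x₂, dist_triangle_right y₁ y₂ w, mem_ball.1 hwy₁,
        mem_ball.1 hwy₂, dist_comm x₁ y₁]
    rcases lt_trichotomy z₁ z₂ with h | h | h
    · linarith [hC_sep h hx₁ hx₂]
    · exact h
    · linarith [hC_sep h hx₂ hx₁, dist_comm x₁ x₂]
  · intro x
    obtain ⟨z, hxz, hmin⟩ := wellFounded_lt.has_min {z | dist x z < R} ⟨x, by simpa using hR⟩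
    obtain ⟨n, hn⟩ := exists_nat_one_div_lt (div_pos (sub_pos.2 hxz) (four_pos : (0 : ℝ) < 4))
    refine ⟨n, z, self_subset_thickening (hr0 n) _ ⟨?_, fun z' hz' => ?_⟩⟩
    · linarith [(lt_div_iff₀ four_pos).1 hn]
    · exact not_lt.1 fun h => hmin z' h hz'

theorem compl_iUnion_prod_of_pairwise_disjoint {ι X Y : Type*} {E : ι → Set X} {N : ι → Set Y}
    (hE : Pairwise (Disjoint on E)) :
    (⋃ i, E i ×ˢ N i)ᶜ = (Prod.fst ⁻¹' ⋃ i, E i)ᶜ ∪ ⋃ i, E i ×ˢ (N i)ᶜ := by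
  ext ⟨x, y⟩
  simp only [mem_compl_iff, mem_iUnion, mem_prod, mem_union, mem_preimage, not_exists, not_and]
  constructor
  · intro h
    by_cases hx : ∃ i, x ∈ E i
    · obtain ⟨i, hxi⟩ := hx
      exact Or.inr ⟨i, hxi, h i hxi⟩
    · exact Or.inl fun i hxi => hx ⟨i, hxi⟩
  · rintro (h | ⟨i, hxi, hyi⟩) j hxj
    · exact absurd hxj (h j)
    · obtain rfl : i = j := by_contra fun hij => disjoint_left.1 (hE hij) hxi hxj
      exact hyi

section DiscreteProd

variable {X Y : Type*} [TopologicalSpace X] [TopologicalSpace Y] {ι : Type*}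

/-- Writing `B i = ⋃ n, g i n` with `(g i n)ᶜ ∈ 𝒜_(β i n)`, the terms are regrouped by the value
of `β i n`, which ranges over the countable set `Iio δ`. -/
theorem iUnion_prod_mem_addClass_of_forall_lt {E : ι → Set X} {δ : Ordinal.{0}} (hδ0 : δ ≠ 0)
    (hδ : δ.card ≤ Cardinal.aleph0)
    (hE : ∀ β < δ, ∀ N : ι → Set Y, (∀ i, (N i)ᶜ ∈ addClass Y β) →
      (⋃ i, E i ×ˢ N i)ᶜ ∈ addClass (X × Y) β)
    {B : ι → Set Y} (hB : ∀ i, B i ∈ addClass Y δ) :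
    ⋃ i, E i ×ˢ B i ∈ addClass (X × Y) δ := by
  simp only [addClass_of_ne_zero hδ0, mem_ofPred_eq] at hB
  choose g hg hBg using hB
  choose β hβδ hgβ using hg
  have : Countable (Iio δ) := by
    rw [← Cardinal.mk_le_aleph0_iff, Cardinal.mk_Iio_ordinal, Cardinal.lift_le_aleph0]
    exact hδ
  classical
  set N : ℕ → Iio δ → ι → Set Y := fun n b i => if β i n = b then g i n else ∅
  have hregroup : ⋃ i, E i ×ˢ B i = ⋃ p : ℕ × Iio δ, ⋃ i, E i ×ˢ N p.1 p.2 i := by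
    ext ⟨x, y⟩
    simp only [hBg, mem_iUnion, mem_prod, N]
    constructor
    · rintro ⟨i, hx, n, hy⟩
      exact ⟨(n, ⟨β i n, hβδ i n⟩), i, hx, by simpa using hy⟩
    · rintro ⟨⟨n, b⟩, i, hx, hy⟩
      split_ifs at hy
      exacts [⟨i, hx, n, hy⟩, hy.elim]
  rw [hregroup]
  refine iUnion_mem_addClass_of_compl_mem hδ0 fun ⟨n, b, hb⟩ => ⟨b, hb, hE b hb _ fun i => ?_⟩
  simp only [N]
  split_ifs with h
  · exact h ▸ hgβ i n
  · simpa using univ_mem_addClass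

variable [PerfectlyNormalSpace X]

theorem compl_iUnion_prod_mem_addClass {E : ι → Set X} (hE : ∀ i, IsClosed (E i))
    (hEd : DiscreteFamily E) {δ : Ordinal.{0}} (hδ : δ.card ≤ Cardinal.aleph0)
    {N : ι → Set Y} (hN : ∀ i, (N i)ᶜ ∈ addClass Y δ) :
    (⋃ i, E i ×ˢ N i)ᶜ ∈ addClass (X × Y) δ := by
  induction δ using WellFoundedLT.induction generalizing N with
  | _ δ IH =>
  rcases eq_or_ne δ 0 with rfl | hδ0
  · simp only [addClass_zero, mem_ofPred_eq, isOpen_compl_iff] at hN ⊢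
    exact (hEd.locallyFinite.prod_right N).isClosed_iUnion fun i => (hE i).prod (hN i)
  · rw [compl_iUnion_prod_of_pairwise_disjoint hEd.pairwise_disjoint]
    refine union_mem_addClass (mem_addClass_of_isGδ_compl hδ0 ?_)
      (iUnion_prod_mem_addClass_of_forall_lt hδ0 hδ
        (fun β hβ N hN => IH β hβ ((Ordinal.card_le_card hβ.le).trans hδ) hN) hN)
    rw [compl_compl]
    exact ((hEd.locallyFinite.isClosed_iUnion hE).isGδ).preimage continuous_fst

theorem iUnion_prod_mem_addClass {V : ι → Set X} (hV : ∀ i, IsOpen (V i))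
    (hVd : DiscreteFamily V) {α : Ordinal.{0}} (hα : α.card ≤ Cardinal.aleph0)
    {B : ι → Set Y} (hB : ∀ i, B i ∈ addClass Y α) :
    ⋃ i, V i ×ˢ B i ∈ addClass (X × Y) α := by
  rcases eq_or_ne α 0 with rfl | hα0
  · simp only [addClass_zero, mem_ofPred_eq] at hB ⊢
    exact isOpen_iUnion fun i => (hV i).prod (hB i)
  · choose K hK hVK using fun i => isGδ_iff_eq_iInter_nat.1 (hV i).isClosed_compl.isGδ
    have hV_eq (i : ι) : V i = ⋃ m, (K i m)ᶜ := by rw [← compl_iInter, ← hVK, compl_compl]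
    simp only [hV_eq, iUnion_prod_const]
    rw [iUnion_comm]
    refine iUnion_mem_addClass fun m => iUnion_prod_mem_addClass_of_forall_lt hα0 hα
      (fun β hβ N hN => ?_) hB
    refine compl_iUnion_prod_mem_addClass (fun i => (hK i m).isClosed_compl)
      (hVd.subset fun i => ?_) ((Ordinal.card_le_card hβ.le).trans hα) hN
    rw [hV_eq i]
    exact subset_iUnion (fun m => (K i m)ᶜ) m

end DiscreteProd

section Preimage

variable {X Y Z ι : Type*} [PseudoMetricSpace X] [TopologicalSpace Z]

theorem eventually_forall_mem_of_subset_ball {V : ℕ → ι → X → Set X}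
    (hV : ∀ k m z, V k m z ⊆ ball z (1 / (k + 1))) {x : X} {N : Set X} (hN : N ∈ 𝓝 x) :
    ∀ᶠ k in atTop, ∀ m z, x ∈ V k m z → z ∈ N := by
  obtain ⟨ε, hε, hεN⟩ := Metric.mem_nhds_iff.1 hN
  obtain ⟨k₀, hk₀⟩ := exists_nat_one_div_lt hε
  refine eventually_atTop.2 ⟨k₀, fun k hk m z hxz => hεN ?_⟩
  calc dist z x = dist x z := dist_comm z x
    _ < 1 / (k + 1) := hV k m z hxz
    _ ≤ 1 / (k₀ + 1) := Nat.one_div_le_one_div hk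
    _ < ε := hk₀

theorem preimage_eq_iUnion_iInter_compl {f : X × Y → Z}
    (hf : ∀ y, Continuous fun x => f (x, y)) {U : Set Z} {W : ℕ → Set Z}
    (hW : ∀ n, IsOpen (W n)) (hUW : ∀ n, Uᶜ ⊆ W n) (hWU : ⋂ n, closure (W n) ⊆ Uᶜ)
    {V : ℕ → ι → X → Set X} (hV : ∀ k m z, V k m z ⊆ ball z (1 / (k + 1)))
    (hVcov : ∀ k x, ∃ m z, x ∈ V k m z) :
    f ⁻¹' U =
      ⋃ n, ⋃ k₀, ⋂ k ≥ k₀, (⋃ m, ⋃ z, V k m z ×ˢ ((fun y => f (z, y)) ⁻¹' W n))ᶜ := by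
  ext ⟨x, y⟩
  have hmem : (x, y) ∈ ⋃ n, ⋃ k₀, ⋂ k ≥ k₀,
      (⋃ m, ⋃ z, V k m z ×ˢ ((fun y => f (z, y)) ⁻¹' W n))ᶜ ↔
      ∃ n, ∀ᶠ k in atTop, ∀ m z, x ∈ V k m z → f (z, y) ∉ W n := by
    simp [eventually_atTop]
  rw [hmem, mem_preimage]
  constructor
  · intro hxU
    obtain ⟨n, hn⟩ : ∃ n, f (x, y) ∉ closure (W n) := by
      simpa using fun h => hWU h hxU
    have hN : (fun x' => f (x', y)) ⁻¹' (closure (W n))ᶜ ∈ 𝓝 x :=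
      (hf y).continuousAt.preimage_mem_nhds (isClosed_closure.isOpen_compl.mem_nhds hn)
    exact ⟨n, (eventually_forall_mem_of_subset_ball hV hN).mono fun k hk m z hxz hz =>
      hk m z hxz (subset_closure hz)⟩
  · rintro ⟨n, hn⟩
    by_contra hxU
    have hN : (fun x' => f (x', y)) ⁻¹' W n ∈ 𝓝 x :=
      (hf y).continuousAt.preimage_mem_nhds ((hW n).mem_nhds (hUW n hxU))
    obtain ⟨k, hk, hkN⟩ := (hn.and (eventually_forall_mem_of_subset_ball hV hN)).exists
    obtain ⟨m, z, hxz⟩ := hVcov k x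
    exact hk m z hxz (hkN m z hxz)

end Preimage

/-- Kuratowski–Montgomery theorem: if `X` is metrizable, `Y` arbitrary, and every
closed subset of `Z` is a closure-Gδ set, then a function `X × Y → Z` which is
continuous in the first variable and Borel of class `α` in the second variable is
Borel of class `α + 1` on the product. -/
theorem kuratowski_montgomery (X Y Z : Type*) [TopologicalSpace X]
    [TopologicalSpace.MetrizableSpace X] [TopologicalSpace Y] [TopologicalSpace Z]
    (hZ : ∀ F : Set Z, IsClosed F → ∃ W : ℕ → Set Z,
      (∀ n, IsOpen (W n)) ∧ F = ⋂ n, W n ∧ F = ⋂ n, closure (W n))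
    (α : Ordinal.{0}) (hα : α.card ≤ Cardinal.aleph0)
    (f : X × Y → Z)
    (hcont : ∀ y : Y, Continuous fun x => f (x, y))
    (hborel : ∀ x : X, BorelMeasClass α fun y => f (x, y)) :
    BorelMeasClass (α + 1) f := by
  intro U hU
  let _ := TopologicalSpace.metrizableSpaceMetric X
  obtain ⟨W, hWo, hUWinter, hUWclosure⟩ := hZ Uᶜ hU.isClosed_compl
  choose V hVo hV hVd hVcov using fun k : ℕ =>
    exists_discreteFamily_cover X (Nat.one_div_pos_of_nat (n := k))
  rw [preimage_eq_iUnion_iInter_compl hcont hWo (fun n => hUWinter ▸ iInter_subset W n)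
    hUWclosure.ge hV hVcov]
  refine iUnion_mem_addClass fun n =>
    iUnion_mem_addClass_of_compl_mem (add_pos_of_right one_pos α).ne' fun k₀ =>
      ⟨α, Order.lt_add_one_iff.2 le_rfl, ?_⟩
  simp only [compl_iInter, compl_compl]
  exact iUnion_mem_addClass fun k => iUnion_mem_addClass fun _ => iUnion_mem_addClass fun m =>
    iUnion_prod_mem_addClass (hVo k m) (hVd k m) hα fun z => hborel z _ (hWo n)
end

section
/- Let X = Y be the one-point compactification of an uncountable discrete space Γ, and define f : X × Y → ℝ by f(x,y) = 1 if x = y ∈ Γ and f(x,y) = 0 otherwise. Then f is separately continuous but f is not a pointwise limit of a sequence of continuous functions on X × Y (i.e. f is not of the first Baire class). -/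
open scoped Classical

open OnePoint Filter

private lemma onePoint_aux_cont_indicator {Γ : Type*} [TopologicalSpace Γ] [DiscreteTopology Γ]
    (b : Γ) : Continuous (fun x : OnePoint Γ => if x = OnePoint.some b then (1:ℝ) else 0) := by
  have hopen : IsOpen ({OnePoint.some b} : Set (OnePoint Γ)) := by
    rw [OnePoint.isOpen_iff_of_notMem (by simp [OnePoint.infty_ne_coe])]
    exact isOpen_discrete _
  have hclosed : IsClosed ({OnePoint.some b} : Set (OnePoint Γ)) := isClosed_singleton
  have hfr : frontier {x : OnePoint Γ | x = OnePoint.some b} = ∅ := by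
    have : {x : OnePoint Γ | x = OnePoint.some b} = {OnePoint.some b} := rfl
    rw [this, IsClopen.frontier_eq ⟨hclosed, hopen⟩]
  exact continuous_if (fun a ha => by rw [hfr] at ha; exact absurd ha (Set.notMem_empty a))
    continuous_const.continuousOn continuous_const.continuousOn

private lemma onePoint_aux_ge {Γ : Type*} [TopologicalSpace Γ] [DiscreteTopology Γ]
    {h : OnePoint Γ × OnePoint Γ → ℝ} (hc : Continuous h) {S : Set Γ} (hS : S.Infinite)
    (hval : ∀ γ ∈ S, (2:ℝ)⁻¹ ≤ h (OnePoint.some γ, OnePoint.some γ)) :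
    (2:ℝ)⁻¹ ≤ h (OnePoint.infty, OnePoint.infty) := by
  set F : Filter Γ := cofinite ⊓ 𝓟 S with hF
  have hne : F.NeBot := frequently_mem_iff_neBot.mp (Set.infinite_iff_frequently_cofinite.mp hS)
  have hcoe : Tendsto (fun γ : Γ => (OnePoint.some γ : OnePoint Γ)) F (nhds OnePoint.infty) := by
    have := OnePoint.tendsto_coe_infty (X := Γ)
    rw [Filter.coclosedCompact_eq_cocompact, cocompact_eq_cofinite] at this
    exact this.mono_left inf_le_left
  have hdiag : Tendsto (fun γ : Γ => ((OnePoint.some γ : OnePoint Γ), (OnePoint.some γ : OnePoint Γ)))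
      F (nhds (OnePoint.infty, OnePoint.infty)) := hcoe.prodMk_nhds hcoe
  refine ge_of_tendsto ((hc.tendsto _).comp hdiag) ?_
  have : ∀ᶠ γ in F, γ ∈ S := eventually_inf_principal.mpr (Eventually.of_forall fun γ hγ => hγ)
  exact this.mono fun γ hγ => hval γ hγ

/-- On the square of the one-point compactification of an uncountable discrete space
`Γ`, the function `f(x,y) = 1` if `x = y ∈ Γ` and `f(x,y) = 0` otherwise is
separately continuous but not of the first Baire class. -/
theorem onePoint_diag_not_baireOne (Γ : Type*) [TopologicalSpace Γ] [DiscreteTopology Γ]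
    (hΓ : ¬ Countable Γ)
    (f : OnePoint Γ × OnePoint Γ → ℝ)
    (hf : ∀ p : OnePoint Γ × OnePoint Γ,
      f p = if ∃ a : Γ, p.1 = OnePoint.some a ∧ p.2 = p.1 then 1 else 0) :
    ((∀ y, Continuous fun x => f (x, y)) ∧ (∀ x, Continuous fun y => f (x, y))) ∧
    ¬ ∃ g : ℕ → OnePoint Γ × OnePoint Γ → ℝ,
        (∀ n, Continuous (g n)) ∧
        ∀ p, Filter.Tendsto (fun n => g n p) Filter.atTop (nhds (f p)) := by
  have hinfty : ∀ x : OnePoint Γ, f (x, OnePoint.infty) = 0 := fun x => by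
    rw [hf]
    exact if_neg (fun ⟨a, h1, h2⟩ => (OnePoint.infty_ne_coe a) (h1 ▸ h2))
  have hinfty' : ∀ y : OnePoint Γ, f (OnePoint.infty, y) = 0 := fun y => by
    rw [hf]
    exact if_neg (fun ⟨a, h1, _⟩ => (OnePoint.infty_ne_coe a) h1)
  have hcoe1 : ∀ (b : Γ) (x : OnePoint Γ),
      f (x, OnePoint.some b) = if x = OnePoint.some b then 1 else 0 := fun b x => by
    rw [hf]
    refine if_congr ⟨fun ⟨a, _, h2⟩ => h2.symm, fun h => ⟨b, h, h.symm⟩⟩ rfl rfl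
  have hcoe2 : ∀ (b : Γ) (y : OnePoint Γ),
      f (OnePoint.some b, y) = if y = OnePoint.some b then 1 else 0 := fun b y => by
    rw [hf]
    refine if_congr ⟨fun ⟨a, _, h2⟩ => h2, fun h => ⟨b, rfl, h⟩⟩ rfl rfl
  have hdiag : ∀ γ : Γ, f (OnePoint.some γ, OnePoint.some γ) = 1 := fun γ => by
    rw [hf]; exact if_pos ⟨γ, rfl, rfl⟩
  constructor
  · constructor
    · intro y
      cases y with
      | infty =>
        have : (fun x => f (x, OnePoint.infty)) = fun _ => (0:ℝ) := funext fun x => hinfty x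
        rw [this]; exact continuous_const
      | coe b =>
        have : (fun x => f (x, OnePoint.some b))
            = fun x => if x = OnePoint.some b then (1:ℝ) else 0 := funext fun x => hcoe1 b x
        rw [this]; exact onePoint_aux_cont_indicator b
    · intro x
      cases x with
      | infty =>
        have : (fun y => f (OnePoint.infty, y)) = fun _ => (0:ℝ) := funext fun y => hinfty' y
        rw [this]; exact continuous_const
      | coe b =>
        have : (fun y => f (OnePoint.some b, y))
            = fun y => if y = OnePoint.some b then (1:ℝ) else 0 := funext fun y => hcoe2 b y
        rw [this]; exact onePoint_aux_cont_indicator b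
  · rintro ⟨g, hgc, hgt⟩
    have hev : ∀ γ : Γ, ∃ N : ℕ, ∀ m ≥ N, (2:ℝ)⁻¹ < g m (OnePoint.some γ, OnePoint.some γ) := by
      intro γ
      have h1 := hgt (OnePoint.some γ, OnePoint.some γ)
      rw [hdiag γ] at h1
      have := h1.eventually (eventually_gt_nhds (show (2:ℝ)⁻¹ < 1 by norm_num))
      exact eventually_atTop.mp this
    choose N hN using hev
    have hfib : ∃ n : ℕ, ¬ (N ⁻¹' {n}).Countable := by
      by_contra hall
      push_neg at hall
      refine hΓ ?_
      rw [← Set.countable_univ_iff]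
      have hsub : (Set.univ : Set Γ) ⊆ ⋃ n : ℕ, N ⁻¹' {n} := fun γ _ =>
        Set.mem_iUnion.mpr ⟨N γ, rfl⟩
      exact (Set.countable_iUnion fun n => not_not.mp (not_not_intro (hall n))).mono hsub
    obtain ⟨n, hn⟩ := hfib
    have hSinf : (N ⁻¹' {n}).Infinite := by
      by_contra h
      rw [Set.not_infinite] at h
      exact hn h.countable
    have hge : ∀ m ≥ n, (2:ℝ)⁻¹ ≤ g m (OnePoint.infty, OnePoint.infty) := by
      intro m hm
      refine onePoint_aux_ge (hgc m) hSinf fun γ hγ => le_of_lt (hN γ m ?_)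
      rw [Set.mem_preimage, Set.mem_singleton_iff] at hγ
      omega
    have h0 := hgt (OnePoint.infty, OnePoint.infty)
    rw [hinfty' OnePoint.infty] at h0
    have hlt := h0.eventually (eventually_lt_nhds (show (0:ℝ) < 2⁻¹ by norm_num))
    obtain ⟨m, hm1, hm2⟩ := (hlt.and (eventually_ge_atTop n)).exists
    exact absurd (hge m hm2) (not_le.mpr hm1)
end

section
/- A compact Hausdorff space X has countable Souslin number (ccc) if and only if for every compact Hausdorff space Y, every separately continuous function f : X × Y → ℝ is of the first Baire class (a pointwise limit of a sequence of jointly continuous functions). -/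
/-!
(⇒) Let `f : X × Y → ℝ` be separately continuous. First, `X` being ccc yields a countable
`D ⊆ X` such that `f (·, y)` is determined by its values on `D`. Otherwise a recursion of
length `ω₁` produces countable sets `D α` and functions `h α = f (·, y α) - f (·, y' α)` vanishing
on `D α` but not identically, where `D α` contains a point of every nonempty finite intersection
of sets `{|h β| > q}`, `β < α`. The ccc property then gives `α₀ < α₁ < ⋯` and points `x m` with
`h αₙ (x m) = 0` for `m < n` and `|h αₙ (x m)| > q` for `n ≤ m`, and limits along an ultrafilter
show that no separately continuous function on a product of compacta has such a staircase.
So `f` factors through the compact metrizable image of `Y` in `ℝ^D`, and on a product with a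
metrizable factor a separately continuous function is the limit of the continuous functions
obtained by averaging along finer and finer partitions of unity (Rudin).

(⇐) Bumps `φ i` inside uncountably many disjoint nonempty open sets `U i` define a separately
continuous function on `X × OnePoint ι`, `ι` discrete. If continuous `g n` converged to it, then
for uncountably many `i` we would have `g n (x i, i) ≥ 1/2` for all `n ≥ N`, with `N` fixed; but
the compact set `{w | ∀ n ≥ N, 1/2 ≤ g n w}` is covered by the disjoint open sets `U i ×ˢ {i}`,
so it meets only finitely many of them.
-/

/-- `f` is of the first Baire class: a pointwise limit of continuous functions. -/
def FirstBaireClass {W : Type*} [TopologicalSpace W] (f : W → ℝ) : Prop :=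
  ∃ g : ℕ → W → ℝ, (∀ n, Continuous (g n)) ∧
    ∀ w, Filter.Tendsto (fun n => g n w) Filter.atTop (nhds (f w))

open Filter Topology Set Function TopologicalSpace

universe u

theorem Set.exists_not_countable_inter_preimage {α β : Type*} [Countable β] {s : Set α}
    (hs : ¬s.Countable) (f : α → β) : ∃ b, ¬(s ∩ f ⁻¹' {b}).Countable := by
  by_contra! h
  refine hs ((countable_iUnion h).mono fun a ha => mem_iUnion.2 ⟨f a, ?_⟩)
  exact ⟨ha, rfl⟩

theorem exists_pos_not_countable_setOf_lt_abs {X W : Type*} [Uncountable W] (h : W → X → ℝ)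
    (hne : ∀ a, ∃ x, h a x ≠ 0) : ∃ q : ℚ, 0 < q ∧ ¬{a | ∃ x, q < |h a x|}.Countable := by
  have hlevel (a : W) : ∃ q : ℚ, 0 < q ∧ ∃ x, q < |h a x| := by
    obtain ⟨x, hx⟩ := hne a
    obtain ⟨q, hq0, hq⟩ := exists_rat_btwn (abs_pos.2 hx)
    exact ⟨q, by exact_mod_cast hq0, x, hq⟩
  choose level hlevel_pos hlevel using hlevel
  obtain ⟨q, hq⟩ := exists_not_countable_inter_preimage not_countable_univ level
  obtain ⟨a, -, ha⟩ := Set.Infinite.nonempty fun h => hq h.countable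
  refine ⟨q, ha ▸ hlevel_pos a, fun h => hq (h.mono ?_)⟩
  rintro b ⟨-, hb⟩
  exact hb ▸ hlevel b

theorem FirstBaireClass.comp {W W' : Type*} [TopologicalSpace W] [TopologicalSpace W']
    {f : W → ℝ} (hf : FirstBaireClass f) {φ : W' → W} (hφ : Continuous φ) :
    FirstBaireClass (f ∘ φ) :=
  let ⟨g, hg, hlim⟩ := hf
  ⟨fun n => g n ∘ φ, fun n => (hg n).comp hφ, fun w => hlim (φ w)⟩

theorem firstBaireClass_of_separatelyContinuous {X Z : Type*} [TopologicalSpace X]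
    [TopologicalSpace Z] [PseudoMetrizableSpace Z] (F : X × Z → ℝ)
    (hx : ∀ z, Continuous fun x => F (x, z)) (hz : ∀ x, Continuous fun z => F (x, z)) :
    FirstBaireClass F := by
  let := pseudoMetrizableSpacePseudoMetric Z
  have hρ (n : ℕ) : ∃ ρ : PartitionOfUnity Z Z univ,
      ρ.IsSubordinate fun c => Metric.ball c (1 / (n + 1)) :=
    PartitionOfUnity.exists_isSubordinate isClosed_univ _ (fun c => Metric.isOpen_ball)
      fun z _ => mem_iUnion.2 ⟨z, Metric.mem_ball_self Nat.one_div_pos_of_nat⟩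
  choose ρ hρ using hρ
  refine ⟨fun n p => ∑ᶠ c, ρ n c p.2 • F (p.1, c), fun n => ?_, fun ⟨x, z⟩ => ?_⟩
  · refine continuous_finsum
      (fun c => ((ρ n c).continuous.comp continuous_snd).smul ((hx c).comp continuous_fst))
      (((ρ n).locallyFinite.preimage_continuous continuous_snd).subset fun c => ?_)
    exact support_smul_subset_left (fun p : X × Z => ρ n c p.2) _
  · -- only points `c` within `1 / (n + 1)` of `z` enter the average, and `F (x, ·)` is
    -- continuous at `z`
    rw [Metric.nhds_basis_closedBall.tendsto_right_iff]
    intro ε hε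
    obtain ⟨δ, hδ, hF⟩ := Metric.continuous_iff.1 (hz x) z ε hε
    filter_upwards [(tendsto_order.1 tendsto_one_div_add_atTop_nhds_zero_nat).2 δ hδ] with n hn
    refine (ρ n).finsum_smul_mem_convex (g := fun c _ => F (x, c)) (mem_univ z) (fun c hc => ?_)
      (convex_closedBall (F (x, z)) ε)
    have hzc : dist z c < 1 / (n + 1) := hρ n c (subset_tsupport _ hc)
    exact (hF c (by rw [dist_comm]; linarith)).le

theorem firstBaireClass_of_factorization {X Y Z : Type*} [TopologicalSpace X]
    [TopologicalSpace Y] [CompactSpace Y] [TopologicalSpace Z] [MetrizableSpace Z]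
    (f : X × Y → ℝ) (hx : ∀ y, Continuous fun x => f (x, y))
    (hy : ∀ x, Continuous fun y => f (x, y)) {Φ : Y → Z} (hΦ : Continuous Φ)
    (hfΦ : ∀ y y', Φ y = Φ y' → ∀ x, f (x, y) = f (x, y')) : FirstBaireClass f := by
  have hsurj : Surjective (rangeFactorization Φ) := rangeFactorization_surjective
  have hcont : Continuous (rangeFactorization Φ) := hΦ.subtype_mk _
  have hquot : IsQuotientMap (rangeFactorization Φ) :=
    hcont.isClosedMap.isQuotientMap hcont hsurj
  let F (p : X × range Φ) : ℝ := f (p.1, surjInv hsurj p.2)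
  have hF (x : X) (y : Y) : F (x, rangeFactorization Φ y) = f (x, y) :=
    hfΦ _ _ (congrArg Subtype.val (surjInv_eq hsurj (rangeFactorization Φ y))) x
  have hFz (x : X) : Continuous fun z => F (x, z) := by
    rw [hquot.continuous_iff]
    exact (hy x).congr fun y => (hF x y).symm
  have hfF : f = F ∘ Prod.map id (rangeFactorization Φ) := funext fun p => (hF p.1 p.2).symm
  rw [hfF]
  exact (firstBaireClass_of_separatelyContinuous F (fun z => hx (surjInv hsurj z)) hFz).comp
    (continuous_id.prodMap hcont)

theorem exists_uncountable_wellOrder_countable_Iio :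
    ∃ (W : Type) (_ : LinearOrder W) (_ : WellFoundedLT W),
      Uncountable W ∧ ∀ a : W, (Iio a).Countable := by
  refine ⟨(Cardinal.aleph 1).ord.ToType, inferInstance, inferInstance, ?_, fun a => ?_⟩
  · rw [← Cardinal.aleph0_lt_mk_iff, Cardinal.mk_ord_toType]
    exact Cardinal.aleph0_lt_aleph_one
  · rw [← Cardinal.le_aleph0_iff_set_countable, ← Cardinal.lt_aleph_one_iff]
    simpa using Cardinal.mk_Iio_lt a

section FiniteInterChain

variable {X W κ : Type*} [LinearOrder W] [WellFoundedLT W]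

noncomputable def finiteInterChain (V : Set X → κ → Set X) : W → Set X :=
  wellFounded_lt.fix fun b D =>
    ⋃ (F : Finset W) (hF : ∀ c ∈ F, c < b) (k : κ)
      (h : (⋂ (c) (hc : c ∈ F), V (D c (hF c hc)) k).Nonempty), {h.some}

variable (V : Set X → κ → Set X)

theorem finiteInterChain_eq (b : W) :
    finiteInterChain V b = ⋃ (F : Finset W) (_ : ∀ c ∈ F, c < b) (k : κ)
      (h : (⋂ c ∈ F, V (finiteInterChain V c) k).Nonempty), {h.some} :=
  wellFounded_lt.fix_eq _ b

theorem monotone_finiteInterChain : Monotone (finiteInterChain V : W → Set X) := by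
  intro a b hab
  rw [finiteInterChain_eq, finiteInterChain_eq]
  exact iUnion_mono' fun F => ⟨F, iUnion_mono' fun hF => ⟨fun c hc => (hF c hc).trans_le hab,
    Subset.rfl⟩⟩

theorem finiteInterChain_countable [Countable κ] (hW : ∀ a : W, (Iio a).Countable) (b : W) :
    (finiteInterChain V b).Countable := by
  rw [finiteInterChain_eq]
  have := (hW b).to_subtype
  have hF : {F : Finset W | ∀ c ∈ F, c < b}.Countable :=
    (countable_range fun F : Finset (Iio b) => F.map (Embedding.subtype _)).mono fun F hF =>
      mem_range.2 ⟨F.subtype (· < b), Finset.subtype_map_of_mem hF⟩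
  exact hF.biUnion fun F _ => countable_iUnion fun k => countable_iUnion fun _ =>
    countable_singleton _

theorem finiteInterChain_inter_nonempty {b : W} {F : Finset W} (hF : ∀ c ∈ F, c < b) {k : κ}
    (h : (⋂ c ∈ F, V (finiteInterChain V c) k).Nonempty) :
    (finiteInterChain V b ∩ ⋂ c ∈ F, V (finiteInterChain V c) k).Nonempty := by
  refine ⟨h.some, ?_, h.some_mem⟩
  rw [finiteInterChain_eq]
  exact mem_iUnion₂.2 ⟨F, hF, mem_iUnion₂.2 ⟨k, h, rfl⟩⟩

end FiniteInterChain

def IsCCC (X : Type*) [TopologicalSpace X] : Prop :=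
  ∀ 𝒞 : Set (Set X), (∀ s ∈ 𝒞, IsOpen s ∧ s.Nonempty) → 𝒞.PairwiseDisjoint id → 𝒞.Countable

theorem IsCCC.exists_isOpen_forall_uncountable {X ι : Type*} [TopologicalSpace X] (hX : IsCCC X)
    [Uncountable ι] (V : ι → Set X) (hVo : ∀ i, IsOpen (V i)) (hVne : ∀ i, (V i).Nonempty) :
    ∃ O : Set X, IsOpen O ∧ O.Nonempty ∧ ∀ U : Set X, IsOpen U → U.Nonempty → U ⊆ O →
      ¬{i | (V i ∩ U).Nonempty}.Countable := by
  set Bad : Set (Set X) := {U | IsOpen U ∧ U.Nonempty ∧ {i | (V i ∩ U).Nonempty}.Countable}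
  obtain ⟨𝒟, h𝒟⟩ := zorn_subset {𝒟 | 𝒟 ⊆ Bad ∧ 𝒟.PairwiseDisjoint id} fun c hc hchain =>
    ⟨⋃₀ c, ⟨sUnion_subset fun 𝒟 h𝒟 => (hc h𝒟).1,
      (pairwiseDisjoint_sUnion hchain.directedOn).2 fun 𝒟 h𝒟 => (hc h𝒟).2⟩,
      fun _ => subset_sUnion_of_mem⟩
  obtain ⟨h𝒟Bad, h𝒟disj⟩ := h𝒟.prop
  have h𝒟count : 𝒟.Countable := hX 𝒟 (fun U hU => ⟨(h𝒟Bad hU).1, (h𝒟Bad hU).2.1⟩) h𝒟disj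
  refine ⟨(closure (⋃₀ 𝒟))ᶜ, isClosed_closure.isOpen_compl, ?_, fun U hUo hUne hUO hUcount => ?_⟩
  · -- if `⋃₀ 𝒟` were dense, every `V i` would meet one of its countably many members
    rw [nonempty_compl]
    intro hdense
    refine not_countable_univ ((h𝒟count.biUnion fun U hU => (h𝒟Bad hU).2.2).mono fun i _ => ?_)
    obtain ⟨x, hxV, W, hW, hxW⟩ :=
      (dense_iff_closure_eq.2 hdense).inter_open_nonempty _ (hVo i) (hVne i)
    exact mem_biUnion hW ⟨x, hxV, hxW⟩
  · have hU : U ∈ 𝒟 := h𝒟.mem_of_prop_insert ⟨insert_subset ⟨hUo, hUne, hUcount⟩ h𝒟Bad,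
      h𝒟disj.insert fun W hW _ => disjoint_left.2 fun x hxU hxW =>
        hUO hxU (subset_closure ⟨W, hW, hxW⟩)⟩
    obtain ⟨x, hx⟩ := hUne
    exact hUO hx (subset_closure ⟨U, hU, hx⟩)

theorem IsCCC.exists_isOpen_forall_exists_gt {X W : Type*} [TopologicalSpace X] [LinearOrder W]
    (hX : IsCCC X) (hW : ∀ b : W, (Iio b).Countable) (V : W → Set X) (hVo : ∀ a, IsOpen (V a))
    (hV : ¬{a | (V a).Nonempty}.Countable) :
    ∃ O : Set X, IsOpen O ∧ O.Nonempty ∧ ∀ U : Set X, IsOpen U → U.Nonempty → U ⊆ O →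
      ∀ b, ∃ a, b < a ∧ (V a ∩ U).Nonempty := by
  have : Uncountable {a | (V a).Nonempty} := not_countable_iff.1 (countable_coe_iff.not.2 hV)
  obtain ⟨O, hOo, hOne, hO⟩ := hX.exists_isOpen_forall_uncountable
    (fun a : {a | (V a).Nonempty} => V a) (fun a => hVo a) fun a => a.2
  refine ⟨O, hOo, hOne, fun U hUo hUne hUO b => ?_⟩
  by_contra! hb
  refine hO U hUo hUne hUO <|
    (((hW b).insert b).preimage Subtype.val_injective).mono fun a ha => ?_
  rw [Iio_insert]
  by_contra hab
  exact ha.ne_empty (hb a (not_le.1 hab))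

theorem exists_strictMono_iInter_nonempty {X W : Type*} [TopologicalSpace X] [Preorder W]
    [Nonempty W] (V : W → Set X) (hVo : ∀ a, IsOpen (V a)) {O : Set X} (hOo : IsOpen O)
    (hOne : O.Nonempty)
    (hV : ∀ U, IsOpen U → U.Nonempty → U ⊆ O → ∀ b, ∃ a, b < a ∧ (V a ∩ U).Nonempty) :
    ∃ α : ℕ → W, StrictMono α ∧ ∀ m, (⋂ k ∈ Finset.range (m + 1), V (α k)).Nonempty := by
  -- the states `(a, U)` of a recursion that shrinks `U` to `U ∩ V a` and then picks a larger `a`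
  let S := {p : W × Set X // IsOpen p.2 ∧ p.2 ⊆ O ∧ (V p.1 ∩ p.2).Nonempty}
  have hnext (p : S) : ∃ a, p.1.1 < a ∧ (V a ∩ (p.1.2 ∩ V p.1.1)).Nonempty :=
    hV _ (p.2.1.inter (hVo _)) (by rw [inter_comm]; exact p.2.2.2)
      (inter_subset_left.trans p.2.2.1) _
  choose next hnext using hnext
  let step (p : S) : S := ⟨(next p, p.1.2 ∩ V p.1.1), p.2.1.inter (hVo _),
    inter_subset_left.trans p.2.2.1, (hnext p).2⟩
  obtain ⟨a₀, -, ha₀⟩ := hV O hOo hOne subset_rfl (Classical.arbitrary W)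
  let seq (n : ℕ) : S := Nat.rec ⟨(a₀, O), hOo, subset_rfl, ha₀⟩ (fun _ => step) n
  have hU : Antitone fun n => (seq n).1.2 := antitone_nat_of_succ_le fun n => inter_subset_left
  refine ⟨fun n => (seq n).1.1, strictMono_nat_of_lt_succ fun n => (hnext (seq n)).1, fun m => ?_⟩
  obtain ⟨x, -, hx⟩ := (seq (m + 1)).2.2.2
  refine ⟨x, mem_iInter₂.2 fun k hk => ?_⟩
  exact (hU (Nat.succ_le_of_lt (Finset.mem_range.1 hk)) hx).2

theorem not_forall_lt_abs_of_eq_zero {X ι : Type*} [TopologicalSpace X] [TopologicalSpace ι]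
    [CompactSpace X] [CompactSpace ι] (g : X × ι → ℝ) (hx : ∀ i, Continuous fun x => g (x, i))
    (hi : ∀ x, Continuous fun i => g (x, i)) (x : ℕ → X) (i : ℕ → ι)
    (hzero : ∀ m n, m < n → g (x m, i n) = 0) {q : ℝ} (hq : 0 < q) :
    ¬ ∀ n m, n ≤ m → q < |g (x m, i n)| := by
  intro hbig
  let U : Ultrafilter ℕ := Ultrafilter.of atTop
  have hU : (U : Filter ℕ) ≤ atTop := Ultrafilter.of_le _
  obtain ⟨x', -, hx'⟩ := isCompact_univ.ultrafilter_le_nhds (U.map x) (by simp)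
  obtain ⟨i', -, hi'⟩ := isCompact_univ.ultrafilter_le_nhds (U.map i) (by simp)
  have hlim (z : X) : Tendsto (fun n => g (z, i n)) U (𝓝 (g (z, i'))) :=
    ((hi z).tendsto i').comp hi'
  have hlim_zero (m : ℕ) : g (x m, i') = 0 :=
    tendsto_nhds_unique (hlim (x m)) <| tendsto_const_nhds.congr' <|
      ((eventually_gt_atTop m).filter_mono hU).mono fun n hn => (hzero m n hn).symm
  have hzero' : g (x', i') = 0 :=
    tendsto_nhds_unique (((hx i').tendsto x').comp hx') (by simp only [comp_def, hlim_zero,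
      tendsto_const_nhds])
  have hbig' (n : ℕ) : q ≤ |g (x', i n)| :=
    ge_of_tendsto (((hx (i n)).tendsto x').comp hx').abs <|
      ((eventually_ge_atTop n).filter_mono hU).mono fun m hm => (hbig n m hm).le
  have := ge_of_tendsto (hlim x').abs (Eventually.of_forall hbig')
  rw [hzero', abs_zero] at this
  linarith

theorem IsCCC.exists_countable_forall_eq_zero {X ι : Type*} [TopologicalSpace X]
    [TopologicalSpace ι] [CompactSpace X] [CompactSpace ι] (hX : IsCCC X) (g : X × ι → ℝ)
    (hx : ∀ i, Continuous fun x => g (x, i)) (hi : ∀ x, Continuous fun i => g (x, i)) :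
    ∃ D : Set X, D.Countable ∧ ∀ i, (∀ d ∈ D, g (d, i) = 0) → ∀ x, g (x, i) = 0 := by
  by_contra! H
  obtain ⟨i₀, -⟩ := H ∅ countable_empty
  have hbad (D : Set X) : ∃ i, D.Countable → (∀ d ∈ D, g (d, i) = 0) ∧ ∃ x, g (x, i) ≠ 0 := by
    by_cases hD : D.Countable
    · obtain ⟨i, hgi⟩ := H D hD
      exact ⟨i, fun _ => hgi⟩
    · exact ⟨i₀, fun h => absurd h hD⟩
  choose bad hbad using hbad
  let V (D : Set X) (q : ℚ) : Set X := {x | q < |g (x, bad D)|}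
  obtain ⟨W, _, _, _, hW⟩ := exists_uncountable_wellOrder_countable_Iio
  let D : W → Set X := finiteInterChain V
  have hDc (a : W) : (D a).Countable := finiteInterChain_countable V hW a
  obtain ⟨q, hq, hV⟩ := exists_pos_not_countable_setOf_lt_abs
    (fun a x => g (x, bad (D a))) fun a => (hbad _ (hDc a)).2
  obtain ⟨O, hOo, hOne, hO⟩ := hX.exists_isOpen_forall_exists_gt hW (fun a => V (D a) q)
    (fun a => isOpen_lt continuous_const (hx _).abs) hV
  obtain ⟨α, hα, hαV⟩ := exists_strictMono_iInter_nonempty (fun a => V (D a) q)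
    (fun a => isOpen_lt continuous_const (hx _).abs) hOo hOne hO
  have hpt (m : ℕ) : (D (α (m + 1)) ∩ ⋂ k ∈ Finset.range (m + 1), V (D (α k)) q).Nonempty := by
    have hF : ∀ c ∈ (Finset.range (m + 1)).image α, c < α (m + 1) := by
      simpa using fun k hk => hα (by omega)
    have hI : ⋂ k ∈ Finset.range (m + 1), V (D (α k)) q =
        ⋂ c ∈ (Finset.range (m + 1)).image α, V (D c) q :=
      (Finset.set_biInter_finset_image (g := fun c => V (D c) q)).symm
    rw [hI]
    exact finiteInterChain_inter_nonempty V hF (hI ▸ hαV m)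
  -- `x m` lies in `D (α n)` for `n > m`, where `g (·, bad (D (α n)))` vanishes, and in
  -- `V (D (α n)) q` for `n ≤ m`
  choose x hxD hxV using hpt
  refine not_forall_lt_abs_of_eq_zero g hx hi x (fun n => bad (D (α n)))
    (fun m n hmn => (hbad _ (hDc _)).1 _ (monotone_finiteInterChain V (hα.monotone hmn) (hxD m)))
    (q := q) (by exact_mod_cast hq) fun n m hnm => ?_
  exact mem_iInter₂.1 (hxV m) n (Finset.mem_range.2 (by omega))

theorem IsCCC.firstBaireClass {X Y : Type*} [TopologicalSpace X] [TopologicalSpace Y]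
    [CompactSpace X] [CompactSpace Y] (hX : IsCCC X) (f : X × Y → ℝ)
    (hx : ∀ y, Continuous fun x => f (x, y)) (hy : ∀ x, Continuous fun y => f (x, y)) :
    FirstBaireClass f := by
  obtain ⟨D, hD, hDf⟩ := hX.exists_countable_forall_eq_zero
    (fun p : X × (Y × Y) => f (p.1, p.2.1) - f (p.1, p.2.2)) (fun i => (hx i.1).sub (hx i.2))
    fun x => ((hy x).comp continuous_fst).sub ((hy x).comp continuous_snd)
  have := hD.to_subtype
  exact firstBaireClass_of_factorization f hx hy (Φ := fun y (d : D) => f (d, y))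
    (continuous_pi fun d => hy d) fun y y' h x =>
      sub_eq_zero.1 (hDf (y, y') (fun d hd => sub_eq_zero.2 (congrFun h ⟨d, hd⟩)) x)

theorem FirstBaireClass.exists_isClosed_not_countable {W : Type*} [TopologicalSpace W]
    {f : W → ℝ} (hf : FirstBaireClass f) {P : Set W} (hP : ¬P.Countable) {t : ℝ}
    (hPt : ∀ w ∈ P, t < f w) :
    ∃ C : Set W, IsClosed C ∧ C ⊆ {w | t ≤ f w} ∧ ¬(C ∩ P).Countable := by
  obtain ⟨g, hg, hlim⟩ := hf
  have hN (w : W) : ∃ N : ℕ, w ∈ P → ∀ n ≥ N, t ≤ g n w := by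
    by_cases hw : w ∈ P
    · obtain ⟨N, hN⟩ := eventually_atTop.1 ((hlim w).eventually (lt_mem_nhds (hPt w hw)))
      exact ⟨N, fun _ n hn => (hN n hn).le⟩
    · exact ⟨0, fun h => absurd h hw⟩
  choose N hN using hN
  obtain ⟨N₀, hN₀⟩ := exists_not_countable_inter_preimage hP N
  refine ⟨⋂ n ≥ N₀, {w | t ≤ g n w},
    isClosed_biInter fun n _ => isClosed_le continuous_const (hg n), fun w hw => ?_,
    fun h => hN₀ (h.mono ?_)⟩
  · exact ge_of_tendsto (hlim w) (eventually_atTop.2 ⟨N₀, fun n hn => mem_iInter₂.1 hw n hn⟩)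
  · rintro w ⟨hwP, hwN⟩
    exact ⟨mem_iInter₂.2 fun n hn => hN w hwP n (hwN ▸ hn), hwP⟩

theorem exists_separatelyContinuous_not_firstBaireClass {X ι : Type*} [TopologicalSpace X]
    [CompactSpace X] [CompletelyRegularSpace X] [TopologicalSpace ι] [DiscreteTopology ι]
    [Uncountable ι] {U : ι → Set X} (hUo : ∀ i, IsOpen (U i)) (hUne : ∀ i, (U i).Nonempty)
    (hdisj : Pairwise (Disjoint on U)) :
    ∃ f : X × OnePoint ι → ℝ, (∀ y, Continuous fun x => f (x, y)) ∧
      (∀ x, Continuous fun y => f (x, y)) ∧ ¬FirstBaireClass f := by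
  choose x hx using hUne
  have hφ (i : ι) : ∃ φ : X → unitInterval, Continuous φ ∧ φ (x i) = 0 ∧ EqOn φ 1 (U i)ᶜ :=
    CompletelyRegularSpace.completely_regular_isOpen _ _ (hUo i) (hx i)
  choose φ hφc hφx hφU using hφ
  let f (p : X × OnePoint ι) : ℝ := OnePoint.elim p.2 0 fun i => 1 - φ i p.1
  have hf_off {z : X} {i : ι} (hz : z ∉ U i) : f (z, i) = 0 := by
    simp [f, hφU i hz]
  refine ⟨f, fun y => ?_, fun z => ?_, fun hf => ?_⟩
  · induction y using OnePoint.rec with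
    | infty => exact continuous_const
    | coe i => exact continuous_const.sub (continuous_subtype_val.comp (hφc i))
  · rw [OnePoint.continuous_iff_from_discrete]
    refine tendsto_const_nhds.congr' (eventually_cofinite.2 ?_)
    refine (Subsingleton.finite (s := {i | z ∈ U i}) fun i hi j hj => ?_).subset fun i hi => ?_
    · exact hdisj.eq (not_disjoint_iff.2 ⟨z, hi, hj⟩)
    · by_contra hz
      exact hi (hf_off hz).symm
  · let e (i : ι) : X × OnePoint ι := (x i, i)
    have hP : ¬(range e).Countable := fun h => not_countable_univ <| by
      simpa using h.preimage (f := e) fun i j h => OnePoint.coe_injective (congrArg Prod.snd h)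
    obtain ⟨C, hC, hCf, hCP⟩ := hf.exists_isClosed_not_countable hP (t := 1 / 2) (by
      rintro _ ⟨i, rfl⟩
      norm_num [f, e, hφx])
    have hcover : C ⊆ ⋃ i, U i ×ˢ {(i : OnePoint ι)} := by
      rintro ⟨z, y⟩ hzy
      replace hzy := hCf hzy
      induction y using OnePoint.rec with
      | infty => norm_num [f] at hzy
      | coe i =>
        by_cases hz : z ∈ U i
        · exact mem_iUnion.2 ⟨i, hz, rfl⟩
        · norm_num [hf_off hz] at hzy
    obtain ⟨I, hI⟩ := hC.isCompact.elim_finite_subcover _ (fun i => (hUo i).prod (by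
      rw [← image_singleton]
      exact OnePoint.isOpen_image_coe.2 (isOpen_discrete _))) hcover
    refine hCP (((I.finite_toSet.image e).countable).mono ?_)
    rintro _ ⟨hC, ⟨j, rfl⟩⟩
    obtain ⟨i, hi, -, hij⟩ := mem_iUnion₂.1 (hI hC)
    exact ⟨i, hi, by rw [OnePoint.coe_injective hij]⟩

/-- A compact Hausdorff space `X` has countable Souslin number (ccc) iff for every
compact Hausdorff space `Y` every separately continuous function `X × Y → ℝ` is of
the first Baire class. -/
theorem ccc_iff_separatelyContinuous_baireOne (X : Type u) [TopologicalSpace X]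
    [CompactSpace X] [T2Space X] :
    (∀ 𝒞 : Set (Set X), (∀ s ∈ 𝒞, IsOpen s ∧ s.Nonempty) →
        𝒞.PairwiseDisjoint id → 𝒞.Countable) ↔
      (∀ (Y : Type u) (_ : TopologicalSpace Y), CompactSpace Y → T2Space Y →
        ∀ f : X × Y → ℝ,
          ((∀ y, Continuous fun x => f (x, y)) ∧ (∀ x, Continuous fun y => f (x, y))) →
          FirstBaireClass f) := by
  refine ⟨fun hX Y _ _ _ f hf => IsCCC.firstBaireClass hX f hf.1 hf.2, fun h 𝒞 h𝒞 hdisj => ?_⟩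
  by_contra h𝒞c
  let _ : TopologicalSpace 𝒞 := ⊥
  have : DiscreteTopology 𝒞 := ⟨rfl⟩
  have : Uncountable 𝒞 := not_countable_iff.1 (countable_coe_iff.not.2 h𝒞c)
  obtain ⟨f, hx, hy, hf⟩ := exists_separatelyContinuous_not_firstBaireClass
    (U := fun s : 𝒞 => s.1) (fun s => (h𝒞 s s.2).1) (fun s => (h𝒞 s s.2).2) hdisj.subtype
  exact hf (h _ _ inferInstance inferInstance f ⟨hx, hy⟩)
end

section
/- If X is a Rudin space (i.e., for every topological space Y, every separately continuous function f : X × Y → ℝ is of the first Baire class) and Y is a t-embedded subspace of X (i.e., there exists a continuous linear-in-the-pointwise-topology extender E : C_p(Y) → C_p(X) with E(f)|_Y = f for all f ∈ C_p(Y)), then Y is a Rudin space. -/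
/-- `X` is a Rudin space: for every topological space `Y`, every separately
continuous function `X × Y → ℝ` is of the first Baire class. -/
def IsRudinSpace (X : Type u) [TopologicalSpace X] : Prop :=
  ∀ (Y : Type u) (_ : TopologicalSpace Y) (f : X × Y → ℝ),
    ((∀ y, Continuous fun x => f (x, y)) ∧ (∀ x, Continuous fun y => f (x, y))) →
    FirstBaireClass f

/-- The topology of pointwise convergence on `C(W, ℝ)`. -/
def pointwiseTop (W : Type*) [TopologicalSpace W] : TopologicalSpace C(W, ℝ) :=
  TopologicalSpace.induced (fun f : C(W, ℝ) => (f : W → ℝ)) Pi.topologicalSpace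

/-!
A separately continuous `f : Y × Z → ℝ` is the same as a continuous map `z ↦ f (·, z)` from `Z`
into `C_p(Y)`. Composing with the extender `E` gives a continuous map `Z → C_p(X)`, i.e. a separately
continuous `F : X × Z → ℝ` with `F (y, z) = f (y, z)` on `Y`. Since `X` is Rudin, `F` is a pointwise
limit of continuous functions, and restricting them to `Y × Z` exhibits `f` as one.
-/

lemma continuous_pointwiseTop_iff {Z W : Type*} [TopologicalSpace Z] [TopologicalSpace W]
    {φ : Z → C(W, ℝ)} :
    @Continuous _ _ _ (pointwiseTop W) φ ↔ ∀ w, Continuous fun z => φ z w := by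
  rw [pointwiseTop, continuous_induced_rng, continuous_pi_iff]
  rfl

lemma FirstBaireClass.comp_continuous {V W : Type*} [TopologicalSpace V] [TopologicalSpace W]
    {f : W → ℝ} (hf : FirstBaireClass f) {g : V → W} (hg : Continuous g) :
    FirstBaireClass (f ∘ g) := by
  obtain ⟨u, hu, hlim⟩ := hf
  exact ⟨fun n => u n ∘ g, fun n => (hu n).comp hg, fun v => hlim (g v)⟩

theorem IsRudinSpace.of_continuous_extender {X Y : Type u} [TopologicalSpace X]
    [TopologicalSpace Y] (hX : IsRudinSpace X) (ι : C(Y, X)) (E : C(Y, ℝ) → C(X, ℝ))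
    (hcont : @Continuous _ _ (pointwiseTop Y) (pointwiseTop X) E)
    (hext : ∀ (f : C(Y, ℝ)) (y : Y), E f (ι y) = f y) :
    IsRudinSpace Y := by
  intro Z _ f ⟨hfY, hfZ⟩
  let φ : Z → C(Y, ℝ) := fun z => ⟨fun y => f (y, z), hfY z⟩
  have hφ : @Continuous _ _ _ (pointwiseTop Y) φ := continuous_pointwiseTop_iff.2 hfZ
  have hEφ : ∀ x, Continuous fun z => E (φ z) x :=
    continuous_pointwiseTop_iff.1 (@Continuous.comp _ _ _ _ (pointwiseTop Y) (pointwiseTop X)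
      _ _ hcont hφ)
  have hF := hX Z _ (fun p => E (φ p.2) p.1) ⟨fun z => (E (φ z)).continuous, hEφ⟩
  convert hF.comp_continuous (ι.continuous.prodMap continuous_id) using 1
  ext ⟨y, z⟩
  exact (hext (φ z) y).symm

theorem rudin_of_t_embedded_general (X : Type u) [TopologicalSpace X] (hX : IsRudinSpace X)
    (Y : Set X) (E : C(Y, ℝ) → C(X, ℝ))
    (hcont : @Continuous _ _ (pointwiseTop Y) (pointwiseTop X) E)
    (hext : ∀ (f : C(Y, ℝ)) (y : Y), E f (y : X) = f y) :
    IsRudinSpace Y :=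
  hX.of_continuous_extender ⟨Subtype.val, continuous_subtype_val⟩ E hcont hext

/-- A t-embedded subspace of a Rudin space is Rudin: if there is a linear extender
`E : C_p(Y) → C_p(X)` continuous in the pointwise topologies with `E f |_Y = f`,
then `Y` is a Rudin space. -/
theorem rudin_of_t_embedded (X : Type u) [TopologicalSpace X] (hX : IsRudinSpace X)
    (Y : Set X) (E : C(Y, ℝ) → C(X, ℝ))
    (hadd : ∀ f g : C(Y, ℝ), E (f + g) = E f + E g)
    (hsmul : ∀ (c : ℝ) (f : C(Y, ℝ)), E (c • f) = c • E f)
    (hcont : @Continuous _ _ (pointwiseTop Y) (pointwiseTop X) E)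
    (hext : ∀ (f : C(Y, ℝ)) (y : Y), E f (y : X) = f y) :
    IsRudinSpace Y :=
  rudin_of_t_embedded_general X hX Y E hcont hext
end
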